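/- arXiv:2511.02502 — 6 statements merged into one kernel-verified Lean document; each statement's English description precedes it below -/
import Mathlib

section
/- Let (α₁, β₁, α₂, β₂) ∈ ℝ⁴ with β₁ > 0, and let f be a probability density function on (x_i, x_f) (with x_i > −∞) that is twice differentiable with f'(x) < 0 on (x_i, x_f) and satisfies sup_x f(x)f''(x)/(f'(x))² < α₁/β₁. Then g₁ = 𝔇_{α₁,β₁}[f] is a differentiable strictly decreasing pdf and, provided the integrals below are finite, S[𝔇_{α₂,β₂}[g₁]] = (α₁α₂ + 2β₂ − 2α₁β₂) S[f] + (β₁α₂ + β₂ − 2β₁β₂) ∫ f(x) log|f'(x)| dx + β₂ ∫ f(x) log| f(x)f''(x)/(f'(x))² − α₁/β₁ | dx + β₂ log β₁. -/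
/-!
Since `s' x * g (s x) = f x`, the map `s` carries `f x dx` to `g y dy`: every integral against
`g` is an integral against `f`, and `log g (s x) = α log f x - β log |f' x|`. The derivative of
`g₁` is computed through the local inverse of `s₁`; it is negative exactly because
`f f'' / f'² < α₁ / β₁`, so `g₁` is again a decreasing density and can be transformed once more.
Pulling the entropy of the second transform back first to `g₁` and then to `f` leaves a linear
combination of `∫ f log f`, `∫ f log |f'|`, `∫ f log |f f'' / f'² - α₁ / β₁|` and `log β₁`.
-/

open MeasureTheory Set Filter Topology

noncomputable section

/-- The open interval with extended-real endpoints, viewed as a set of reals. -/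
def intIoo (a b : EReal) : Set ℝ := {x : ℝ | a < (x : EReal) ∧ (x : EReal) < b}

theorem isOpen_intIoo (a b : EReal) : IsOpen (intIoo a b) :=
  isOpen_Ioo.preimage continuous_coe_real_ereal

theorem convex_intIoo (a b : EReal) : Convex ℝ (intIoo a b) :=
  convex_iff_ordConnected.2 <|
    ordConnected_Ioo.preimage_mono fun _ _ h => EReal.coe_le_coe_iff.2 h

theorem IsOpen.image_of_hasStrictDerivAt {𝕜 : Type*} [NontriviallyNormedField 𝕜]
    [CompleteSpace 𝕜] {s s' : 𝕜 → 𝕜} {U : Set 𝕜} (hU : IsOpen U)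
    (hs : ∀ x ∈ U, HasStrictDerivAt s (s' x) x) (hs' : ∀ x ∈ U, s' x ≠ 0) :
    IsOpen (s '' U) := by
  refine isOpen_iff_mem_nhds.2 ?_
  rintro _ ⟨x, hx, rfl⟩
  rw [← (hs x hx).map_nhds_eq (hs' x hx)]
  exact image_mem_map (hU.mem_nhds hx)

theorem HasStrictDerivAt.hasDerivAt_of_eventually_comp_eq {𝕜 : Type*}
    [NontriviallyNormedField 𝕜] [CompleteSpace 𝕜] {s g F : 𝕜 → 𝕜} {s' F' x : 𝕜}
    (hs : HasStrictDerivAt s s' x) (hs' : s' ≠ 0) (hF : HasDerivAt F F' x)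
    (hgF : ∀ᶠ t in 𝓝 x, g (s t) = F t) : HasDerivAt g (F' / s') (s x) := by
  set L := hs.localInverse s s' x hs'
  have hLs : L (s x) = x := hs.eventually_left_inverse hs' |>.self_of_nhds
  have hL : HasDerivAt L s'⁻¹ (s x) := (hs.to_localInverse hs').hasDerivAt
  have hgFL : g =ᶠ[𝓝 (s x)] F ∘ L := by
    have hgF' : ∀ᶠ y in 𝓝 (s x), g (s (L y)) = F (L y) :=
      hL.continuousAt.tendsto.eventually (hLs.symm ▸ hgF)
    filter_upwards [hgF', hs.eventually_right_inverse hs'] with y hy hsL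
    rwa [hsL] at hy
  rw [div_eq_mul_inv]
  exact ((hLs.symm ▸ hF : HasDerivAt F F' (L (s x))).comp (s x) hL).congr_of_eventuallyEq hgFL

theorem strictAntiOn_of_forall_hasDerivAt_neg {D : Set ℝ} (hD : Convex ℝ D) {f f' : ℝ → ℝ}
    (hf : ∀ x ∈ D, HasDerivAt f (f' x) x) (hf' : ∀ x ∈ D, f' x < 0) : StrictAntiOn f D :=
  strictAntiOn_of_deriv_neg hD (fun x hx => (hf x hx).continuousAt.continuousWithinAt)
    fun x hx => (hf x (interior_subset hx)).deriv ▸ hf' x (interior_subset hx)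

theorem pos_of_hasDerivAt_neg {D : Set ℝ} (hD : Convex ℝ D) (hD_open : IsOpen D)
    {f f' : ℝ → ℝ} (hf_nonneg : ∀ x ∈ D, 0 ≤ f x) (hf : ∀ x ∈ D, HasDerivAt f (f' x) x)
    (hf' : ∀ x ∈ D, f' x < 0) {x : ℝ} (hx : x ∈ D) : 0 < f x := by
  obtain ⟨z, hzD, hxz⟩ := ((eventually_nhdsWithin_of_eventually_nhds (hD_open.mem_nhds hx)).and
    self_mem_nhdsWithin : ∀ᶠ z in 𝓝[>] x, z ∈ D ∧ x < z).exists
  exact (hf_nonneg z hzD).trans_lt (strictAntiOn_of_forall_hasDerivAt_neg hD hf hf' hx hzD hxz)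

theorem integral_mul_congr_of_eqOn {α : Type*} [MeasurableSpace α] {μ : Measure α}
    {I : Set α} {f φ ψ : α → ℝ} (hf : ∀ x ∉ I, f x = 0) (h : EqOn φ ψ I) :
    ∫ x, f x * φ x ∂μ = ∫ x, f x * ψ x ∂μ := by
  refine integral_congr_ae (Eventually.of_forall fun x => ?_)
  by_cases hx : x ∈ I
  · simp only [h hx]
  · simp only [hf x hx, zero_mul]

/-- `(dg/ds)(s x)` for `g = 𝔇_{α,β}[f]`, written in terms of `a = f x`, `b = f' x`, `c = f'' x`. -/
def downDeriv (α β a b c : ℝ) : ℝ :=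
  β * a ^ (2 * α - 2) * |b| ^ (1 - 2 * β) * (a * c / b ^ 2 - α / β)

theorem downDeriv_eq_div {α β a b c : ℝ} (hβ : β ≠ 0) (ha : 0 < a) (hb : b < 0) :
    downDeriv α β a b c =
      (b * α * a ^ (α - 1) * (-b) ^ (-β) + a ^ α * (-c * -β * (-b) ^ (-β - 1)))
        / (a ^ (1 - α) * |b| ^ β) := by
  obtain ⟨q, hq, rfl⟩ : ∃ q, 0 < q ∧ b = -q := ⟨-b, neg_pos.2 hb, (neg_neg b).symm⟩
  have hA : 0 < a ^ α := Real.rpow_pos_of_pos ha α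
  have hQ : 0 < q ^ β := Real.rpow_pos_of_pos hq β
  rw [downDeriv, neg_neg, abs_neg, abs_of_pos hq,
    show 2 * α - 2 = (α - 1) + (α - 1) by ring, show 1 - 2 * β = 1 + (-β + -β) by ring,
    Real.rpow_add ha, Real.rpow_add hq, Real.rpow_add hq, Real.rpow_sub ha, Real.rpow_sub ha,
    Real.rpow_sub hq, Real.rpow_neg hq.le]
  simp only [Real.rpow_one]
  field_simp
  ring

theorem downDeriv_neg {α β a b c : ℝ} (hβ : 0 < β) (ha : 0 < a) (hb : b ≠ 0)
    (hD : a * c / b ^ 2 - α / β < 0) : downDeriv α β a b c < 0 :=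
  mul_neg_of_pos_of_neg (by positivity) hD

theorem log_abs_downDeriv {α β a b c : ℝ} (hβ : 0 < β) (ha : 0 < a) (hb : b ≠ 0)
    (hD : a * c / b ^ 2 - α / β ≠ 0) :
    Real.log |downDeriv α β a b c| = Real.log β + (2 * α - 2) * Real.log a
      + (1 - 2 * β) * Real.log |b| + Real.log |a * c / b ^ 2 - α / β| := by
  have hb' : 0 < |b| := abs_pos.2 hb
  rw [downDeriv, abs_mul, abs_of_pos (by positivity), Real.log_mul (by positivity)
    (abs_ne_zero.2 hD), Real.log_mul (by positivity) (by positivity),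
    Real.log_mul (by positivity) (by positivity), Real.log_rpow ha, Real.log_rpow hb']

/-- `g = 𝔇_{α,β}[f]` on `I`, with change of variable `s`; `f'` stands for the derivative of `f`,
but is tied to it only by the hypotheses of the lemmas that need it. -/
structure IsDownTransform (α β : ℝ) (I : Set ℝ) (f f' s g : ℝ → ℝ) : Prop where
  hasDerivAt_map : ∀ x ∈ I, HasDerivAt s (f x ^ (1 - α) * |f' x| ^ β) x
  strictMonoOn_map : StrictMonoOn s I
  comp_map : ∀ x ∈ I, g (s x) = f x ^ α * |f' x| ^ (-β)
  eq_zero_of_notMem : ∀ y ∉ s '' I, g y = 0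

namespace IsDownTransform

variable {α β : ℝ} {I : Set ℝ} {f f' s g : ℝ → ℝ} {x : ℝ}

theorem comp_pos (h : IsDownTransform α β I f f' s g) (hx : x ∈ I) (hfx : 0 < f x)
    (hf'x : f' x ≠ 0) : 0 < g (s x) := by
  have : 0 < |f' x| := abs_pos.2 hf'x
  rw [h.comp_map x hx]
  positivity

theorem nonneg (h : IsDownTransform α β I f f' s g) (hf : ∀ x ∈ I, 0 < f x)
    (hf' : ∀ x ∈ I, f' x ≠ 0) (y : ℝ) : 0 ≤ g y := by
  by_cases hy : y ∈ s '' I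
  · obtain ⟨x, hx, rfl⟩ := hy
    exact (h.comp_pos hx (hf x hx) (hf' x hx)).le
  · exact (h.eq_zero_of_notMem y hy).ge

theorem speed_mul_comp (h : IsDownTransform α β I f f' s g) (hx : x ∈ I) (hfx : 0 < f x)
    (hf'x : f' x ≠ 0) : f x ^ (1 - α) * |f' x| ^ β * g (s x) = f x := by
  rw [h.comp_map x hx, mul_mul_mul_comm, ← Real.rpow_add hfx, ← Real.rpow_add (abs_pos.2 hf'x)]
  norm_num

theorem log_comp (h : IsDownTransform α β I f f' s g) (hx : x ∈ I) (hfx : 0 < f x)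
    (hf'x : f' x ≠ 0) : Real.log (g (s x)) = α * Real.log (f x) - β * Real.log |f' x| := by
  have : 0 < |f' x| := abs_pos.2 hf'x
  rw [h.comp_map x hx, Real.log_mul (by positivity) (by positivity), Real.log_rpow hfx,
    Real.log_rpow this]
  ring

theorem integral_mul_eq (h : IsDownTransform α β I f f' s g) (hI : MeasurableSet I)
    (hf : ∀ x ∈ I, 0 < f x) (hf' : ∀ x ∈ I, f' x ≠ 0) (hf_zero : ∀ x ∉ I, f x = 0)
    (ψ : ℝ → ℝ) : ∫ y, g y * ψ y = ∫ x, f x * ψ (s x) := calc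
  ∫ y, g y * ψ y = ∫ y in s '' I, g y * ψ y :=
    (setIntegral_eq_integral_of_forall_compl_eq_zero fun y hy => by
      rw [h.eq_zero_of_notMem y hy, zero_mul]).symm
  _ = ∫ x in I, |f x ^ (1 - α) * |f' x| ^ β| • (g (s x) * ψ (s x)) :=
    integral_image_eq_integral_abs_deriv_smul hI
      (fun x hx => (h.hasDerivAt_map x hx).hasDerivWithinAt) h.strictMonoOn_map.injOn _
  _ = ∫ x in I, f x * ψ (s x) := setIntegral_congr_fun hI fun x hx => by
    have : 0 < |f' x| := abs_pos.2 (hf' x hx)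
    have := hf x hx
    rw [smul_eq_mul, abs_of_pos (by positivity), ← mul_assoc,
      h.speed_mul_comp hx (hf x hx) (hf' x hx)]
  _ = ∫ x, f x * ψ (s x) := setIntegral_eq_integral_of_forall_compl_eq_zero fun x hx => by
    rw [hf_zero x hx, zero_mul]

theorem integral_mul_log (h : IsDownTransform α β I f f' s g) (hI : MeasurableSet I)
    (hf : ∀ x ∈ I, 0 < f x) (hf' : ∀ x ∈ I, f' x ≠ 0) (hf_zero : ∀ x ∉ I, f x = 0) :
    ∫ y, g y * Real.log (g y) = ∫ x, f x * (α * Real.log (f x) - β * Real.log |f' x|) := by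
  rw [h.integral_mul_eq hI hf hf' hf_zero]
  exact integral_mul_congr_of_eqOn hf_zero fun x hx => h.log_comp hx (hf x hx) (hf' x hx)

theorem hasStrictDerivAt_map (h : IsDownTransform α β I f f' s g) (hI : IsOpen I)
    (hx : x ∈ I) (hfx : 0 < f x) (hf'x : f' x ≠ 0) (hfc : ContinuousAt f x)
    (hf'c : ContinuousAt f' x) : HasStrictDerivAt s (f x ^ (1 - α) * |f' x| ^ β) x :=
  hasStrictDerivAt_of_hasDerivAt_of_continuousAt
    (eventually_of_mem (hI.mem_nhds hx) h.hasDerivAt_map)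
    ((hfc.rpow_const (Or.inl hfx.ne')).mul
      (hf'c.abs.rpow_const (Or.inl (abs_pos.2 hf'x).ne')))

theorem convex_image (h : IsDownTransform α β I f f' s g) (hI : Convex ℝ I) :
    Convex ℝ (s '' I) :=
  (hI.isPreconnected.image s fun x hx => (h.hasDerivAt_map x hx).continuousAt.continuousWithinAt
    ).convex

theorem isOpen_image (h : IsDownTransform α β I f f' s g) (hI : IsOpen I)
    (hf : ∀ x ∈ I, 0 < f x) (hf' : ∀ x ∈ I, f' x ≠ 0) (hfc : ∀ x ∈ I, ContinuousAt f x)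
    (hf'c : ∀ x ∈ I, ContinuousAt f' x) : IsOpen (s '' I) :=
  hI.image_of_hasStrictDerivAt
    (fun x hx => h.hasStrictDerivAt_map hI hx (hf x hx) (hf' x hx) (hfc x hx) (hf'c x hx))
    fun x hx => by have : 0 < |f' x| := abs_pos.2 (hf' x hx); have := hf x hx; positivity

theorem hasDerivAt_downDeriv (h : IsDownTransform α β I f f' s g) {f'' : ℝ → ℝ}
    (hβ : β ≠ 0) (hI : IsOpen I) (hx : x ∈ I) (hfx : 0 < f x) (hf'x : f' x < 0)
    (hfd : HasDerivAt f (f' x) x) (hf'd : HasDerivAt f' (f'' x) x) :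
    HasDerivAt g (downDeriv α β (f x) (f' x) (f'' x)) (s x) := by
  have hF : HasDerivAt (fun t => f t ^ α * (-f' t) ^ (-β))
      (f' x * α * f x ^ (α - 1) * (-f' x) ^ (-β)
        + f x ^ α * (-f'' x * -β * (-f' x) ^ (-β - 1))) x :=
    (hfd.rpow_const (Or.inl hfx.ne')).mul (hf'd.neg.rpow_const (Or.inl (neg_pos.2 hf'x).ne'))
  have hgF : ∀ᶠ t in 𝓝 x, g (s t) = f t ^ α * (-f' t) ^ (-β) := by
    filter_upwards [hI.mem_nhds hx, hf'd.continuousAt.eventually_lt_const hf'x] with t ht hf't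
    rw [h.comp_map t ht, abs_of_neg hf't]
  have hs := h.hasStrictDerivAt_map hI hx hfx hf'x.ne hfd.continuousAt hf'd.continuousAt
  have : 0 < |f' x| := abs_pos.2 hf'x.ne
  rw [downDeriv_eq_div hβ hfx hf'x]
  exact hs.hasDerivAt_of_eventually_comp_eq (by positivity) hF hgF

theorem exists_hasDerivAt (h : IsDownTransform α β I f f' s g) {f'' : ℝ → ℝ} (hβ : β ≠ 0)
    (hI : IsOpen I) (hf : ∀ x ∈ I, 0 < f x) (hf' : ∀ x ∈ I, f' x < 0)
    (hfd : ∀ x ∈ I, HasDerivAt f (f' x) x) (hf'd : ∀ x ∈ I, HasDerivAt f' (f'' x) x) :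
    ∃ g' : ℝ → ℝ, ∀ x ∈ I,
      g' (s x) = downDeriv α β (f x) (f' x) (f'' x) ∧ HasDerivAt g (g' (s x)) (s x) := by
  set G := fun x => downDeriv α β (f x) (f' x) (f'' x)
  have hG : ∀ x ∈ I, G (Function.invFunOn s I (s x)) = G x := fun x hx =>
    congrArg G (h.strictMonoOn_map.injOn.leftInvOn_invFunOn hx)
  refine ⟨fun y => G (Function.invFunOn s I y), fun x hx => ?_⟩
  dsimp only
  rw [hG x hx]
  exact ⟨rfl, h.hasDerivAt_downDeriv hβ hI hx (hf x hx) (hf' x hx) (hfd x hx) (hf'd x hx)⟩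

end IsDownTransform

theorem shannon_entropy_of_iterated_biparametric_down_transform_general
    (α₁ β₁ α₂ β₂ : ℝ) (hβ₁ : 0 < β₁)
    (xi : ℝ) (xf : EReal)
    (f f' f'' s₁ g₁ : ℝ → ℝ)
    (hf_nonneg : ∀ x, 0 ≤ f x)
    (hf_supp : ∀ x ∉ intIoo (xi : EReal) xf, f x = 0)
    (hf_int : (∫ x, f x) = 1)
    (hf' : ∀ x ∈ intIoo (xi : EReal) xf, HasDerivAt f (f' x) x)
    (hf'' : ∀ x ∈ intIoo (xi : EReal) xf, HasDerivAt f' (f'' x) x)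
    (hf'_neg : ∀ x ∈ intIoo (xi : EReal) xf, f' x < 0)
    (hsup : ∃ c, c < α₁ / β₁ ∧
      ∀ x ∈ intIoo (xi : EReal) xf, f x * f'' x / (f' x) ^ 2 ≤ c)
    (hs₁ : ∀ x ∈ intIoo (xi : EReal) xf,
      HasDerivAt s₁ (f x ^ (1 - α₁) * |f' x| ^ β₁) x)
    (hs₁_mono : StrictMonoOn s₁ (intIoo (xi : EReal) xf))
    (hg₁ : ∀ x ∈ intIoo (xi : EReal) xf, g₁ (s₁ x) = f x ^ α₁ * |f' x| ^ (-β₁))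
    (hg₁_supp : ∀ y ∉ s₁ '' intIoo (xi : EReal) xf, g₁ y = 0) :
    ((∀ y, 0 ≤ g₁ y) ∧ (∫ y, g₁ y) = 1 ∧
      StrictAntiOn g₁ (s₁ '' intIoo (xi : EReal) xf))
    ∧ ∃ g₁' : ℝ → ℝ,
      (∀ x ∈ intIoo (xi : EReal) xf,
        HasDerivAt g₁ (g₁' (s₁ x)) (s₁ x) ∧ g₁' (s₁ x) < 0)
      ∧ ∀ s₂ g₂ : ℝ → ℝ,
        (∀ y ∈ s₁ '' intIoo (xi : EReal) xf,
          HasDerivAt s₂ (g₁ y ^ (1 - α₂) * |g₁' y| ^ β₂) y) →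
        StrictMonoOn s₂ (s₁ '' intIoo (xi : EReal) xf) →
        (∀ y ∈ s₁ '' intIoo (xi : EReal) xf,
          g₂ (s₂ y) = g₁ y ^ α₂ * |g₁' y| ^ (-β₂)) →
        (∀ z ∉ s₂ '' (s₁ '' intIoo (xi : EReal) xf), g₂ z = 0) →
        Integrable (fun z => g₂ z * Real.log (g₂ z)) →
        Integrable (fun x => f x * Real.log (f x)) →
        Integrable (fun x => f x * Real.log |f' x|) →
        Integrable (fun x => f x * Real.log |f x * f'' x / (f' x) ^ 2 - α₁ / β₁|) →
        (-∫ z, g₂ z * Real.log (g₂ z))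
          = (α₁ * α₂ + 2 * β₂ - 2 * α₁ * β₂) * (-∫ x, f x * Real.log (f x))
            + (β₁ * α₂ + β₂ - 2 * β₁ * β₂) * (∫ x, f x * Real.log |f' x|)
            + β₂ * (∫ x, f x * Real.log |f x * f'' x / (f' x) ^ 2 - α₁ / β₁|)
            + β₂ * Real.log β₁ := by
  obtain ⟨c, hc, hfc⟩ := hsup
  set I := intIoo (xi : EReal) xf
  have hI : IsOpen I := isOpen_intIoo _ _
  have hT₁ : IsDownTransform α₁ β₁ I f f' s₁ g₁ := ⟨hs₁, hs₁_mono, hg₁, hg₁_supp⟩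
  have hf'_ne : ∀ x ∈ I, f' x ≠ 0 := fun x hx => (hf'_neg x hx).ne
  have hf_pos : ∀ x ∈ I, 0 < f x := fun x =>
    pos_of_hasDerivAt_neg (convex_intIoo _ _) hI (fun x _ => hf_nonneg x) hf' hf'_neg
  have hD_neg : ∀ x ∈ I, f x * f'' x / f' x ^ 2 - α₁ / β₁ < 0 := fun x hx =>
    sub_neg.2 ((hfc x hx).trans_lt hc)
  obtain ⟨g₁', hg₁'⟩ := hT₁.exists_hasDerivAt hβ₁.ne' hI hf_pos hf'_neg hf' hf''
  have hg₁'_neg : ∀ y ∈ s₁ '' I, g₁' y < 0 := by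
    rintro _ ⟨x, hx, rfl⟩
    exact (hg₁' x hx).1 ▸ downDeriv_neg hβ₁ (hf_pos x hx) (hf'_ne x hx) (hD_neg x hx)
  refine ⟨⟨hT₁.nonneg hf_pos hf'_ne, ?_, ?_⟩, g₁', fun x hx =>
    ⟨(hg₁' x hx).2, hg₁'_neg _ ⟨x, hx, rfl⟩⟩, ?_⟩
  · simpa [hf_int] using hT₁.integral_mul_eq hI.measurableSet hf_pos hf'_ne hf_supp fun _ => 1
  · refine strictAntiOn_of_forall_hasDerivAt_neg (hT₁.convex_image (convex_intIoo _ _)) ?_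
      hg₁'_neg
    rintro _ ⟨x, hx, rfl⟩
    exact (hg₁' x hx).2
  intro s₂ g₂ hs₂ hs₂_mono hg₂ hg₂_supp _ hf_log_f hf_log_f' hf_log_D
  have hT₂ : IsDownTransform α₂ β₂ (s₁ '' I) g₁ g₁' s₂ g₂ := ⟨hs₂, hs₂_mono, hg₂, hg₂_supp⟩
  have hJ : IsOpen (s₁ '' I) := hT₁.isOpen_image hI hf_pos hf'_ne
    (fun x hx => (hf' x hx).continuousAt) fun x hx => (hf'' x hx).continuousAt
  have hg₁_pos : ∀ y ∈ s₁ '' I, 0 < g₁ y := by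
    rintro _ ⟨x, hx, rfl⟩
    exact hT₁.comp_pos hx (hf_pos x hx) (hf'_ne x hx)
  have hlog : EqOn (fun x => α₂ * Real.log (g₁ (s₁ x)) - β₂ * Real.log |g₁' (s₁ x)|)
      (fun x => (α₁ * α₂ + 2 * β₂ - 2 * α₁ * β₂) * Real.log (f x)
        - (β₁ * α₂ + β₂ - 2 * β₁ * β₂) * Real.log |f' x|
        - β₂ * Real.log |f x * f'' x / (f' x) ^ 2 - α₁ / β₁| - β₂ * Real.log β₁) I := by
    intro x hx
    simp only
    rw [hT₁.log_comp hx (hf_pos x hx) (hf'_ne x hx), (hg₁' x hx).1,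
      log_abs_downDeriv hβ₁ (hf_pos x hx) (hf'_ne x hx) (hD_neg x hx).ne]
    ring
  rw [hT₂.integral_mul_log hJ.measurableSet hg₁_pos (fun y hy => (hg₁'_neg y hy).ne) hg₁_supp,
    hT₁.integral_mul_eq hI.measurableSet hf_pos hf'_ne hf_supp,
    integral_mul_congr_of_eqOn hf_supp hlog]
  have hf_int' : Integrable f := .of_integral_ne_zero (hf_int ▸ one_ne_zero)
  simp only [mul_sub, mul_left_comm (f _)]
  rw [integral_sub, integral_sub, integral_sub, integral_const_mul, integral_const_mul,
    integral_const_mul, integral_const_mul, integral_mul_const, hf_int]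
  · ring
  all_goals fun_prop

/-- the biparametric down transform `g₁ = 𝔇_{α₁,β₁}[f]` of a strictly
decreasing twice differentiable density with `sup f f''/(f')² < α₁/β₁` is a
differentiable strictly decreasing pdf, and the Shannon entropy of its further
biparametric down transform `𝔇_{α₂,β₂}[g₁]` has the stated closed form. -/
theorem shannon_entropy_of_iterated_biparametric_down_transform
    (α₁ β₁ α₂ β₂ : ℝ) (hβ₁ : 0 < β₁)
    (xi : ℝ) (xf : EReal) (hif : (xi : EReal) < xf)
    (f f' f'' s₁ g₁ : ℝ → ℝ)
    (hf_meas : Measurable f)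
    (hf_nonneg : ∀ x, 0 ≤ f x)
    (hf_supp : ∀ x ∉ intIoo (xi : EReal) xf, f x = 0)
    (hf_int : (∫ x, f x) = 1)
    (hf' : ∀ x ∈ intIoo (xi : EReal) xf, HasDerivAt f (f' x) x)
    (hf'' : ∀ x ∈ intIoo (xi : EReal) xf, HasDerivAt f' (f'' x) x)
    (hf'_neg : ∀ x ∈ intIoo (xi : EReal) xf, f' x < 0)
    (hsup : ∃ c, c < α₁ / β₁ ∧
      ∀ x ∈ intIoo (xi : EReal) xf, f x * f'' x / (f' x) ^ 2 ≤ c)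
    (hs₁ : ∀ x ∈ intIoo (xi : EReal) xf,
      HasDerivAt s₁ (f x ^ (1 - α₁) * |f' x| ^ β₁) x)
    (hs₁_mono : StrictMonoOn s₁ (intIoo (xi : EReal) xf))
    (hg₁ : ∀ x ∈ intIoo (xi : EReal) xf, g₁ (s₁ x) = f x ^ α₁ * |f' x| ^ (-β₁))
    (hg₁_supp : ∀ y ∉ s₁ '' intIoo (xi : EReal) xf, g₁ y = 0) :
    ((∀ y, 0 ≤ g₁ y) ∧ (∫ y, g₁ y) = 1 ∧
      StrictAntiOn g₁ (s₁ '' intIoo (xi : EReal) xf))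
    ∧ ∃ g₁' : ℝ → ℝ,
      (∀ x ∈ intIoo (xi : EReal) xf,
        HasDerivAt g₁ (g₁' (s₁ x)) (s₁ x) ∧ g₁' (s₁ x) < 0)
      ∧ ∀ s₂ g₂ : ℝ → ℝ,
        (∀ y ∈ s₁ '' intIoo (xi : EReal) xf,
          HasDerivAt s₂ (g₁ y ^ (1 - α₂) * |g₁' y| ^ β₂) y) →
        StrictMonoOn s₂ (s₁ '' intIoo (xi : EReal) xf) →
        (∀ y ∈ s₁ '' intIoo (xi : EReal) xf,
          g₂ (s₂ y) = g₁ y ^ α₂ * |g₁' y| ^ (-β₂)) →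
        (∀ z ∉ s₂ '' (s₁ '' intIoo (xi : EReal) xf), g₂ z = 0) →
        Integrable (fun z => g₂ z * Real.log (g₂ z)) →
        Integrable (fun x => f x * Real.log (f x)) →
        Integrable (fun x => f x * Real.log |f' x|) →
        Integrable (fun x => f x * Real.log |f x * f'' x / (f' x) ^ 2 - α₁ / β₁|) →
        (-∫ z, g₂ z * Real.log (g₂ z))
          = (α₁ * α₂ + 2 * β₂ - 2 * α₁ * β₂) * (-∫ x, f x * Real.log (f x))
            + (β₁ * α₂ + β₂ - 2 * β₁ * β₂) * (∫ x, f x * Real.log |f' x|)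
            + β₂ * (∫ x, f x * Real.log |f x * f'' x / (f' x) ^ 2 - α₁ / β₁|)
            + β₂ * Real.log β₁ :=
  shannon_entropy_of_iterated_biparametric_down_transform_general α₁ β₁ α₂ β₂ hβ₁ xi xf f f' f'' s₁
    g₁ hf_nonneg hf_supp hf_int hf' hf'' hf'_neg hsup hs₁ hs₁_mono hg₁ hg₁_supp
end
end

section
/- Let α, β ∈ ℝ and let f be a probability density function on (x_i, x_f) (with x_i > −∞) that is differentiable with f'(x) < 0 on (x_i, x_f), and let g = 𝔇_{α,β}[f] be its biparametric down transform. Then for every λ ∈ ℝ, ∫ g(s)^λ ds = ∫ f(x)^{1+(λ−1)α}|f'(x)|^{(1−λ)β} dx whenever one side is finite. Consequently, if λ ≠ 1, β ≠ 0 and α ≠ 2β, the Rényi entropy power of g satisfies N_λ[g] = φ_{(1−λ)β, 2−α/β}[f]^{2β−α}. -/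
/-!
The change of variables `y = s x` turns `∫ g(y)^λ dy` over the range of `s` into
`∫ s'(x) g(s x)^λ dx`, and on the interval `f > 0` (as `f` decreases to the nonnegative values it
takes to the right) and `|f'| > 0`, so `s'(x) g(s x)^λ = f^{1-α+αλ} |f'|^{β-βλ}` is a pure identity
between real powers. The Fisher-information integrand `|f^{-α/β} f'|^{(1-λ)β} f` is the same
function, and the exponents of the entropy power and of `φ` satisfy
`1/(1-λ) = (2β-α) / ((1-λ)β(2-α/β))`.
-/

open MeasureTheory Set Filter Topology

noncomputable section

theorem strictAntiOn_of_hasDerivAt_neg {D : Set ℝ} (hD : Convex ℝ D) (hDo : IsOpen D)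
    {f f' : ℝ → ℝ} (hf : ∀ x ∈ D, HasDerivAt f (f' x) x) (hf' : ∀ x ∈ D, f' x < 0) :
    StrictAntiOn f D := by
  refine strictAntiOn_of_hasDerivWithinAt_neg (f' := f') hD
    (fun x hx => (hf x hx).continuousAt.continuousWithinAt) (fun x hx => ?_) ?_
  · exact (hf x (interior_subset hx)).hasDerivWithinAt
  · simpa only [hDo.interior_eq] using hf'

theorem StrictAntiOn.pos_of_isOpen {α : Type*} [LinearOrder α] [TopologicalSpace α]
    [OrderTopology α] [DenselyOrdered α] [NoMaxOrder α] {S : Set α} {f : α → ℝ} (hf : StrictAntiOn f S)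
    (hS : IsOpen S) (hf_nonneg : ∀ x ∈ S, 0 ≤ f x) {x : α} (hx : x ∈ S) : 0 < f x := by
  obtain ⟨y, hyS, hxy⟩ : ∃ y, y ∈ S ∧ x < y :=
    ((eventually_nhdsWithin_of_eventually_nhds (hS.mem_nhds hx)).and
      (self_mem_nhdsWithin (s := Ioi x))).exists
  exact (hf_nonneg y hyS).trans_lt (hf hx hyS hxy)

theorem downTransform_integrand_eq {a b : ℝ} (ha : 0 < a) (hb : 0 < b) (α β lam : ℝ) :
    |a ^ (1 - α) * b ^ β| * (a ^ α * b ^ (-β)) ^ lam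
      = a ^ (1 + (lam - 1) * α) * b ^ ((1 - lam) * β) := by
  rw [abs_of_pos (by positivity), Real.mul_rpow (by positivity) (by positivity),
    ← Real.rpow_mul ha.le, ← Real.rpow_mul hb.le,
    show 1 + (lam - 1) * α = (1 - α) + α * lam by ring,
    show (1 - lam) * β = β + -β * lam by ring, Real.rpow_add ha, Real.rpow_add hb]
  ring

theorem fisher_integrand_eq {a : ℝ} (ha : 0 < a) (d : ℝ) {α β : ℝ} (hβ : β ≠ 0) (lam : ℝ) :
    |a ^ ((2 - α / β) - 2) * d| ^ ((1 - lam) * β) * a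
      = a ^ (1 + (lam - 1) * α) * |d| ^ ((1 - lam) * β) := by
  have hexp : ((2 - α / β) - 2) * ((1 - lam) * β) = (lam - 1) * α := by
    field_simp
    ring
  rw [abs_mul, abs_of_pos (by positivity), Real.mul_rpow (by positivity) (abs_nonneg d),
    ← Real.rpow_mul ha.le, hexp, add_comm, Real.rpow_add ha, Real.rpow_one]
  ring

theorem one_div_one_sub_eq_fisher_exponent_mul {α β lam : ℝ} (hlam : lam ≠ 1) (hβ : β ≠ 0)
    (hαβ : α ≠ 2 * β) :
    (1 : ℝ) / (1 - lam) = 1 / ((1 - lam) * β * (2 - α / β)) * (2 * β - α) := by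
  have h1 : (1 : ℝ) - lam ≠ 0 := sub_ne_zero.mpr hlam.symm
  have h2 : 2 * β - α ≠ 0 := sub_ne_zero.mpr hαβ.symm
  rw [show (1 - lam) * β * (2 - α / β) = (1 - lam) * (2 * β - α) by field_simp]
  field_simp

theorem setIntegral_image_rpow_downTransform {I : Set ℝ} (hI : MeasurableSet I)
    {α β lam : ℝ} {f f' s g : ℝ → ℝ} (hf_pos : ∀ x ∈ I, 0 < f x) (hf'_ne : ∀ x ∈ I, f' x ≠ 0)
    (hs : ∀ x ∈ I, HasDerivWithinAt s (f x ^ (1 - α) * |f' x| ^ β) I x) (hs_inj : InjOn s I)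
    (hg : ∀ x ∈ I, g (s x) = f x ^ α * |f' x| ^ (-β)) :
    ∫ y in s '' I, g y ^ lam
      = ∫ x in I, f x ^ (1 + (lam - 1) * α) * |f' x| ^ ((1 - lam) * β) := by
  rw [integral_image_eq_integral_abs_deriv_smul hI hs hs_inj]
  refine setIntegral_congr_fun hI fun x hx => ?_
  rw [smul_eq_mul, hg x hx,
    downTransform_integrand_eq (hf_pos x hx) (abs_pos.mpr (hf'_ne x hx))]

theorem renyi_power_of_biparametric_down_transform_general
    (α β lam : ℝ) (xi : ℝ) (xf : EReal)
    (f f' s g : ℝ → ℝ)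
    (hf_nonneg : ∀ x, 0 ≤ f x)
    (hf' : ∀ x ∈ intIoo (xi : EReal) xf, HasDerivAt f (f' x) x)
    (hf'_neg : ∀ x ∈ intIoo (xi : EReal) xf, f' x < 0)
    (hs : ∀ x ∈ intIoo (xi : EReal) xf,
      HasDerivAt s (f x ^ (1 - α) * |f' x| ^ β) x)
    (hs_mono : StrictMonoOn s (intIoo (xi : EReal) xf))
    (hg : ∀ x ∈ intIoo (xi : EReal) xf, g (s x) = f x ^ α * |f' x| ^ (-β)) :
    (∫ y in s '' intIoo (xi : EReal) xf, g y ^ lam)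
      = (∫ x in intIoo (xi : EReal) xf,
          f x ^ (1 + (lam - 1) * α) * |f' x| ^ ((1 - lam) * β))
    ∧ (lam ≠ 1 → β ≠ 0 → α ≠ 2 * β →
        (∫ y in s '' intIoo (xi : EReal) xf, g y ^ lam) ^ ((1 : ℝ) / (1 - lam))
          = ((∫ x in intIoo (xi : EReal) xf,
              |f x ^ ((2 - α / β) - 2) * f' x| ^ ((1 - lam) * β) * f x)
              ^ ((1 : ℝ) / (((1 - lam) * β) * (2 - α / β)))) ^ (2 * β - α)) := by
  have hI := isOpen_intIoo xi xf
  have hf_pos : ∀ x ∈ intIoo xi xf, 0 < f x := fun x hx =>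
    (strictAntiOn_of_hasDerivAt_neg (convex_intIoo _ _) hI hf' hf'_neg).pos_of_isOpen hI
      (fun y _ => hf_nonneg y) hx
  have hrenyi := setIntegral_image_rpow_downTransform (lam := lam) hI.measurableSet hf_pos
    (fun x hx => (hf'_neg x hx).ne) (fun x hx => (hs x hx).hasDerivWithinAt) hs_mono.injOn hg
  refine ⟨hrenyi, fun hlam hβ hαβ => ?_⟩
  have hfisher : ∫ x in intIoo xi xf, |f x ^ ((2 - α / β) - 2) * f' x| ^ ((1 - lam) * β) * f x
      = ∫ x in intIoo xi xf, f x ^ (1 + (lam - 1) * α) * |f' x| ^ ((1 - lam) * β) :=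
    setIntegral_congr_fun hI.measurableSet fun x hx => fisher_integrand_eq (hf_pos x hx) _ hβ lam
  have hnonneg : 0 ≤ ∫ x in intIoo xi xf, f x ^ (1 + (lam - 1) * α) * |f' x| ^ ((1 - lam) * β) :=
    setIntegral_nonneg hI.measurableSet fun x _ => by have := hf_nonneg x; positivity
  rw [hrenyi, hfisher, ← Real.rpow_mul hnonneg,
    one_div_one_sub_eq_fisher_exponent_mul hlam hβ hαβ]

/-- for the biparametric down transform `g = 𝔇_{α,β}[f]`,
`∫ g^λ = ∫ f^{1+(λ-1)α}|f'|^{(1-λ)β}` whenever one side is finite; consequently,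
for `λ ≠ 1`, `β ≠ 0`, `α ≠ 2β`, the Rényi entropy power satisfies
`N_λ[g] = φ_{(1-λ)β, 2-α/β}[f]^{2β-α}`. -/
theorem renyi_power_of_biparametric_down_transform
    (α β lam : ℝ) (xi : ℝ) (xf : EReal) (hif : (xi : EReal) < xf)
    (f f' s g : ℝ → ℝ)
    (hf_meas : Measurable f)
    (hf_nonneg : ∀ x, 0 ≤ f x)
    (hf_supp : ∀ x ∉ intIoo (xi : EReal) xf, f x = 0)
    (hf_int : (∫ x, f x) = 1)
    (hf' : ∀ x ∈ intIoo (xi : EReal) xf, HasDerivAt f (f' x) x)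
    (hf'_neg : ∀ x ∈ intIoo (xi : EReal) xf, f' x < 0)
    (hs : ∀ x ∈ intIoo (xi : EReal) xf,
      HasDerivAt s (f x ^ (1 - α) * |f' x| ^ β) x)
    (hs_mono : StrictMonoOn s (intIoo (xi : EReal) xf))
    (hg : ∀ x ∈ intIoo (xi : EReal) xf, g (s x) = f x ^ α * |f' x| ^ (-β))
    (hg_supp : ∀ y ∉ s '' intIoo (xi : EReal) xf, g y = 0)
    (hg_meas : Measurable g)
    (hside : IntegrableOn (fun y => g y ^ lam) (s '' intIoo (xi : EReal) xf)
      ∨ IntegrableOn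
          (fun x => f x ^ (1 + (lam - 1) * α) * |f' x| ^ ((1 - lam) * β))
          (intIoo (xi : EReal) xf)) :
    (∫ y in s '' intIoo (xi : EReal) xf, g y ^ lam)
      = (∫ x in intIoo (xi : EReal) xf,
          f x ^ (1 + (lam - 1) * α) * |f' x| ^ ((1 - lam) * β))
    ∧ (lam ≠ 1 → β ≠ 0 → α ≠ 2 * β →
        (∫ y in s '' intIoo (xi : EReal) xf, g y ^ lam) ^ ((1 : ℝ) / (1 - lam))
          = ((∫ x in intIoo (xi : EReal) xf,
              |f x ^ ((2 - α / β) - 2) * f' x| ^ ((1 - lam) * β) * f x)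
              ^ ((1 : ℝ) / (((1 - lam) * β) * (2 - α / β)))) ^ (2 * β - α)) :=
  renyi_power_of_biparametric_down_transform_general α β lam xi xf f f' s g hf_nonneg hf' hf'_neg hs
    hs_mono hg
end
end

section
/- Let β ≠ 0, α ≠ 2β, λ ≠ 1, let f be a probability density function, positive and continuous on (x_i, x_f), with base point x₀ ∈ [x_i, x_f], and let g = 𝔘_{α,β}[f] be its biparametric up transform. Then, whenever the integrals are finite, N_λ[g]^{1−λ} = |(2β−α)/β|^{β(1−λ)/(α−2β)} ∫ |∫_{x₀}^x f(t)^{(β−1)/β} dt|^{β(λ−1)/(2β−α)} f(x) dx; that is, the Rényi entropy power of the biparametric up transform equals, up to the explicit constant, the cumulative moment μ_{β(λ−1)/(2β−α), 1/β}[f] with base point x₀ raised to the power 1/(1−λ). -/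
/-!
The change of variables `v = u(x)` turns `∫ g(v)^λ dv` over the range of `u` into
`∫ |u'(x)| g(u(x))^λ dx`. Since `u` is a tail integral, `|u'(x)| = |cY(x)|^e f(x)` with
`c = (α-2β)/β`, `e = β/(α-2β)`, while `g(u(x)) = |cY(x)|^{-e}`, so the integrand collapses to
`|cY(x)|^{e(1-λ)} f(x)`, the cumulative-moment integrand up to the constant `|c|^{e(1-λ)}`.
The derivative of `u` exists away from `x₀`: off `x₀` the primitive `Y` of the positive function
`f^{(β-1)/β}` does not vanish, unless the primitive diverges, in which case `Y` is identically `0`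
(the junk value of the interval integral) and so is `u'`.
-/

open MeasureTheory Set Filter Topology

noncomputable section

namespace Real

theorem rpow_mul_rpow_neg_rpow {b e lam : ℝ} (hb : 0 ≤ b) (h : e * (1 - lam) ≠ 0) :
    b ^ e * (b ^ (-e)) ^ lam = b ^ (e * (1 - lam)) := by
  rcases hb.eq_or_lt with rfl | hb
  · rw [zero_rpow (left_ne_zero_of_mul h), zero_mul, zero_rpow h]
  · rw [← rpow_mul hb.le, ← rpow_add hb]
    ring_nf

theorem abs_rpow_mul_mul_rpow_neg_rpow {c y w e lam : ℝ} (hw : 0 ≤ w)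
    (h : e * (1 - lam) ≠ 0) :
    |(|c * y| ^ e * w)| * (|c * y| ^ (-e)) ^ lam
      = |c| ^ (e * (1 - lam)) * (|y| ^ (e * (1 - lam)) * w) := by
  rw [abs_of_nonneg (by positivity), mul_right_comm, rpow_mul_rpow_neg_rpow (abs_nonneg _) h,
    abs_mul, mul_rpow (abs_nonneg _) (abs_nonneg _), mul_assoc]

end Real

theorem intervalIntegral_ne_zero_of_pos_on {G : ℝ → ℝ} {a b : ℝ}
    (hG : IntervalIntegrable G volume a b) (hpos : ∀ x ∈ uIoo a b, 0 < G x) (hab : a ≠ b) :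
    ∫ x in a..b, G x ≠ 0 := by
  rcases hab.lt_or_gt with h | h
  · exact (intervalIntegral.intervalIntegral_pos_of_pos_on hG
      (fun x hx => hpos x (Ioo_subset_uIoo hx)) h).ne'
  · rw [intervalIntegral.integral_symm, neg_ne_zero]
    exact (intervalIntegral.intervalIntegral_pos_of_pos_on hG.symm
      (fun x hx => hpos x (Ioo_subset_uIoo' hx)) h).ne'

theorem hasDerivAt_primitive_or_primitive_eq_zero {s : Set ℝ} (hs : IsOpen s)
    (hs' : s.OrdConnected) {G : ℝ → ℝ} (hG : ContinuousOn G s) (x₀ : ℝ) :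
    (∀ x ∈ s, IntervalIntegrable G volume x₀ x ∧
        HasDerivAt (fun y => ∫ t in x₀..y, G t) (G x) x) ∨
      ∀ x ∈ s, ∫ t in x₀..x, G t = 0 := by
  by_cases h : ∃ x ∈ s, IntervalIntegrable G volume x₀ x
  · obtain ⟨x, hx, hint⟩ := h
    refine Or.inl fun y hy => ?_
    have hint_y : IntervalIntegrable G volume x₀ y :=
      hint.trans ((hG.mono (hs'.uIcc_subset hx hy)).intervalIntegrable)
    exact ⟨hint_y, intervalIntegral.integral_hasDerivAt_right hint_y
      (hG.stronglyMeasurableAtFilter hs y hy) (hG.continuousAt (hs.mem_nhds hy))⟩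
  · push Not at h
    exact Or.inr fun x hx => intervalIntegral.integral_undef (h x hx)

theorem integral_image_eq_integral_abs_mul_of_eq_sub_intervalIntegral {s : Set ℝ} (hs : IsOpen s)
    {u H : ℝ → ℝ} {a : ℝ} (hu : ∀ x ∈ s, ∀ y ∈ s, u y = u x - ∫ t in x..y, H t)
    (hH : ContinuousOn H (s \ {a})) (hinj : InjOn u s) (φ : ℝ → ℝ) :
    ∫ v in u '' s, φ v = ∫ x in s, |H x| * φ (u x) := by
  have hs' : IsOpen (s \ {a}) := hs.sdiff isClosed_singleton
  have hderiv : ∀ x ∈ s \ {a}, HasDerivAt u (-H x) x := by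
    intro x hx
    have hFTC := intervalIntegral.integral_hasDerivAt_right IntervalIntegrable.refl
      (hH.stronglyMeasurableAtFilter hs' x hx) (hH.continuousAt (hs'.mem_nhds hx))
    refine (hFTC.const_sub (u x)).congr_of_eventuallyEq ?_
    filter_upwards [hs.mem_nhds hx.1] with y hy using hu x hx.1 y hy
  have hcov := integral_image_eq_integral_abs_deriv_smul hs'.measurableSet
    (fun x hx => (hderiv x hx).hasDerivWithinAt) (hinj.mono sdiff_subset) φ
  simp only [abs_neg, smul_eq_mul] at hcov
  have himage : u '' (s \ {a}) =ᵐ[volume] u '' s := by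
    rw [hinj.image_sdiff]
    exact sdiff_null_ae_eq_self
      (((subsingleton_singleton.anti inter_subset_right).image u).measure_zero _)
  rw [← setIntegral_congr_set himage, hcov,
    setIntegral_congr_set (sdiff_null_ae_eq_self (measure_singleton a))]

theorem ordConnected_intIoo (a b : EReal) : (intIoo a b).OrdConnected :=
  ordConnected_Ioo.preimage_mono EReal.coe_strictMono.monotone

theorem uIoo_subset_intIoo {a b : EReal} {x x₀ : ℝ} (hx : x ∈ intIoo a b) (ha : a ≤ x₀)
    (hb : x₀ ≤ b) : uIoo x x₀ ⊆ intIoo a b := by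
  intro t ht
  rcases le_total x x₀ with h | h
  · rw [uIoo_of_le h] at ht
    exact ⟨hx.1.trans (EReal.coe_lt_coe_iff.2 ht.1), (EReal.coe_lt_coe_iff.2 ht.2).trans_le hb⟩
  · rw [uIoo_of_ge h] at ht
    exact ⟨ha.trans_lt (EReal.coe_lt_coe_iff.2 ht.1), (EReal.coe_lt_coe_iff.2 ht.2).trans hx.2⟩

theorem continuousOn_rpow_abs_mul_primitive {a b : EReal} {x₀ : ℝ} (ha : a ≤ x₀)
    (hb : x₀ ≤ b) {G : ℝ → ℝ} (hG : ContinuousOn G (intIoo a b))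
    (hG_pos : ∀ x ∈ intIoo a b, 0 < G x) {c : ℝ} (hc : c ≠ 0) (e : ℝ) :
    ContinuousOn (fun x => |c * ∫ t in x₀..x, G t| ^ e) (intIoo a b \ {x₀}) := by
  rcases hasDerivAt_primitive_or_primitive_eq_zero (isOpen_intIoo a b) (ordConnected_intIoo a b)
    hG x₀ with h | h
  · intro x hx
    obtain ⟨hint, hderiv⟩ := h x hx.1
    have hne : ∫ t in x₀..x, G t ≠ 0 := intervalIntegral_ne_zero_of_pos_on hint
      (fun t ht => hG_pos t (uIoo_subset_intIoo hx.1 ha hb (uIoo_comm x₀ x ▸ ht)))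
      (Ne.symm hx.2)
    exact ((continuousAt_const.mul hderiv.continuousAt).abs.rpow_const
      (Or.inl (abs_ne_zero.2 (mul_ne_zero hc hne)))).continuousWithinAt
  · exact (continuousOn_const (c := |c * 0| ^ e)).congr fun x hx => by rw [h x hx.1]

theorem setIntegral_intIoo_eq_intervalIntegral_add {H : ℝ → ℝ} {b : EReal} {x y : ℝ}
    (hxy : x ≤ y) (hy : (y : EReal) < b) (hH : IntegrableOn H (intIoo x b)) :
    ∫ r in intIoo x b, H r = (∫ r in x..y, H r) + ∫ r in intIoo y b, H r := by
  have hsplit : intIoo x b = Ioc x y ∪ intIoo y b := by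
    ext r
    simp only [intIoo, mem_ofPred_eq, mem_union, mem_Ioc, EReal.coe_lt_coe_iff]
    constructor
    · rintro ⟨hxr, hrb⟩
      exact (le_or_gt r y).imp (fun h => ⟨hxr, h⟩) fun h => ⟨h, hrb⟩
    · rintro (⟨hxr, hry⟩ | ⟨hyr, hrb⟩)
      · exact ⟨hxr, (EReal.coe_le_coe_iff.2 hry).trans_lt hy⟩
      · exact ⟨hxy.trans_lt hyr, hrb⟩
  have hdisj : Disjoint (Ioc x y) (intIoo y b) :=
    disjoint_left.2 fun r hr hr' => (EReal.coe_lt_coe_iff.1 hr'.1).not_ge hr.2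
  rw [hsplit] at hH ⊢
  rw [setIntegral_union hdisj (isOpen_intIoo _ _).measurableSet hH.left_of_union
    hH.right_of_union, intervalIntegral.integral_of_le hxy]

theorem eq_sub_intervalIntegral_of_eq_setIntegral_intIoo {a b : EReal} {u H : ℝ → ℝ}
    (hH : ∀ x ∈ intIoo a b, IntegrableOn H (intIoo x b))
    (hu : ∀ x ∈ intIoo a b, u x = ∫ r in intIoo x b, H r) :
    ∀ x ∈ intIoo a b, ∀ y ∈ intIoo a b, u y = u x - ∫ t in x..y, H t := by
  intro x hx y hy
  rcases le_total x y with hxy | hyx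
  · rw [hu x hx, hu y hy, setIntegral_intIoo_eq_intervalIntegral_add hxy hy.2 (hH x hx)]
    ring
  · rw [hu x hx, hu y hy, setIntegral_intIoo_eq_intervalIntegral_add hyx hx.2 (hH y hy),
      intervalIntegral.integral_symm]
    ring

theorem renyi_power_of_biparametric_up_transform_general
    (α β lam : ℝ) (hβ : β ≠ 0) (hαβ : α ≠ 2 * β) (hlam : lam ≠ 1)
    (xi xf : EReal)
    (x₀ : ℝ) (hx₀l : xi ≤ (x₀ : EReal)) (hx₀r : (x₀ : EReal) ≤ xf)
    (f Y u g : ℝ → ℝ)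
    (hf_pos : ∀ x ∈ intIoo xi xf, 0 < f x)
    (hf_cont : ContinuousOn f (intIoo xi xf))
    (hY : ∀ x, Y x = ∫ t in x₀..x, f t ^ ((β - 1) / β))
    (hu_fin : ∀ x ∈ intIoo xi xf,
      IntegrableOn (fun r => |((α - 2 * β) / β) * Y r| ^ (β / (α - 2 * β)) * f r)
        (intIoo (x : EReal) xf))
    (hu : ∀ x ∈ intIoo xi xf,
      u x = ∫ r in intIoo (x : EReal) xf,
        |((α - 2 * β) / β) * Y r| ^ (β / (α - 2 * β)) * f r)
    (hu_anti : StrictAntiOn u (intIoo xi xf))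
    (hg : ∀ x ∈ intIoo xi xf,
      g (u x) = |((α - 2 * β) / β) * Y x| ^ (β / (2 * β - α))) :
    ((∫ v in u '' intIoo xi xf, g v ^ lam) ^ ((1 : ℝ) / (1 - lam))) ^ (1 - lam)
      = |(2 * β - α) / β| ^ (β * (1 - lam) / (α - 2 * β))
        * ∫ x in intIoo xi xf,
            |∫ t in x₀..x, f t ^ ((β - 1) / β)| ^ (β * (lam - 1) / (2 * β - α)) * f x := by
  obtain rfl : Y = fun x => ∫ t in x₀..x, f t ^ ((β - 1) / β) := funext hY
  set c := (α - 2 * β) / β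
  set e := β / (α - 2 * β)
  set q := β * (lam - 1) / (2 * β - α)
  have hαβ' : α - 2 * β ≠ 0 := sub_ne_zero.2 hαβ
  have hneg : β / (2 * β - α) = -e := by rw [← neg_sub α, div_neg]
  have heq : e * (1 - lam) = q := by
    simp only [q]
    rw [mul_div_right_comm, hneg]
    ring
  have hq : e * (1 - lam) ≠ 0 := mul_ne_zero (div_ne_zero hβ hαβ') (sub_ne_zero.2 hlam.symm)
  have hH : ContinuousOn (fun r => |c * ∫ t in x₀..r, f t ^ ((β - 1) / β)| ^ e * f r)
      (intIoo xi xf \ {x₀}) :=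
    (continuousOn_rpow_abs_mul_primitive hx₀l hx₀r
      (fun x hx => (hf_cont x hx).rpow_const (Or.inl (hf_pos x hx).ne'))
      (fun x hx => Real.rpow_pos_of_pos (hf_pos x hx) _) (div_ne_zero hαβ' hβ) e).mul
      (hf_cont.mono sdiff_subset)
  have hcov : ∫ v in u '' intIoo xi xf, g v ^ lam
      = |c| ^ q * ∫ x in intIoo xi xf, |∫ t in x₀..x, f t ^ ((β - 1) / β)| ^ q * f x := by
    rw [integral_image_eq_integral_abs_mul_of_eq_sub_intervalIntegral (isOpen_intIoo _ _)
      (eq_sub_intervalIntegral_of_eq_setIntegral_intIoo hu_fin hu) hH hu_anti.injOn,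
      ← integral_const_mul]
    refine setIntegral_congr_fun (isOpen_intIoo _ _).measurableSet fun x hx => ?_
    rw [hg x hx, hneg, Real.abs_rpow_mul_mul_rpow_neg_rpow (hf_pos x hx).le hq, heq]
  have hnonneg :
      0 ≤ |c| ^ q * ∫ x in intIoo xi xf, |∫ t in x₀..x, f t ^ ((β - 1) / β)| ^ q * f x :=
    mul_nonneg (by positivity) (setIntegral_nonneg (isOpen_intIoo _ _).measurableSet
      fun x hx => mul_nonneg (by positivity) (hf_pos x hx).le)
  have hconst : |(2 * β - α) / β| ^ (β * (1 - lam) / (α - 2 * β)) = |c| ^ q := by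
    rw [abs_div, abs_div, abs_sub_comm, ← heq, mul_div_right_comm]
  rw [hcov, one_div, Real.rpow_inv_rpow hnonneg (sub_ne_zero.2 hlam.symm), hconst]

/-- the Rényi entropy power of the biparametric up transform
`g = 𝔘_{α,β}[f]` satisfies
`N_λ[g]^{1-λ} = |(2β-α)/β|^{β(1-λ)/(α-2β)} · μ_{β(λ-1)/(2β-α), 1/β}[f]`. -/
theorem renyi_power_of_biparametric_up_transform
    (α β lam : ℝ) (hβ : β ≠ 0) (hαβ : α ≠ 2 * β) (hlam : lam ≠ 1)
    (xi xf : EReal) (hif : xi < xf)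
    (x₀ : ℝ) (hx₀l : xi ≤ (x₀ : EReal)) (hx₀r : (x₀ : EReal) ≤ xf)
    (f Y u g : ℝ → ℝ)
    (hf_meas : Measurable f)
    (hf_nonneg : ∀ x, 0 ≤ f x)
    (hf_supp : ∀ x ∉ intIoo xi xf, f x = 0)
    (hf_int : (∫ x, f x) = 1)
    (hf_pos : ∀ x ∈ intIoo xi xf, 0 < f x)
    (hf_cont : ContinuousOn f (intIoo xi xf))
    (hY : ∀ x, Y x = ∫ t in x₀..x, f t ^ ((β - 1) / β))
    (hu_fin : ∀ x ∈ intIoo xi xf,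
      IntegrableOn (fun r => |((α - 2 * β) / β) * Y r| ^ (β / (α - 2 * β)) * f r)
        (intIoo (x : EReal) xf))
    (hu : ∀ x ∈ intIoo xi xf,
      u x = ∫ r in intIoo (x : EReal) xf,
        |((α - 2 * β) / β) * Y r| ^ (β / (α - 2 * β)) * f r)
    (hu_anti : StrictAntiOn u (intIoo xi xf))
    (hg : ∀ x ∈ intIoo xi xf,
      g (u x) = |((α - 2 * β) / β) * Y x| ^ (β / (2 * β - α)))
    (hg_supp : ∀ v ∉ u '' intIoo xi xf, g v = 0)
    (hfin1 : IntegrableOn (fun v => g v ^ lam) (u '' intIoo xi xf))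
    (hfin2 : IntegrableOn
      (fun x => |∫ t in x₀..x, f t ^ ((β - 1) / β)| ^ (β * (lam - 1) / (2 * β - α)) * f x)
      (intIoo xi xf)) :
    ((∫ v in u '' intIoo xi xf, g v ^ lam) ^ ((1 : ℝ) / (1 - lam))) ^ (1 - lam)
      = |(2 * β - α) / β| ^ (β * (1 - lam) / (α - 2 * β))
        * ∫ x in intIoo xi xf,
            |∫ t in x₀..x, f t ^ ((β - 1) / β)| ^ (β * (lam - 1) / (2 * β - α)) * f x :=
  renyi_power_of_biparametric_up_transform_general α β lam hβ hαβ hlam xi xf x₀ hx₀l hx₀r f Y u g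
    hf_pos hf_cont hY hu_fin hu hu_anti hg
end
end

section
/- Let (p, γ, α, β) ∈ ℝ⁴ and let f be a probability density function on (x_i, x_f) (with x_i > −∞) that is differentiable with f'(x) < 0 on (x_i, x_f). Let g = 𝔇_{α,β}[f] be its biparametric down transform, with the change of variable s normalized so that s(x₀) = 0 for a fixed x₀ ∈ (x_i, x_f). Then, whenever the integrals are finite, the cumulative moment of g with base point 0 equals the generalized down-moment of f with base point x₀: ∫ |∫_0^{σ} g(t)^{1−γ} dt|^p g(σ) dσ = ∫ |∫_{x₀}^x f(t)^{1−αγ} |f'(t)|^{βγ} dt|^p f(x) dx. -/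
open MeasureTheory Set Filter Topology

noncomputable section

/-- the cumulative moment of the biparametric down transform
`g = 𝔇_{α,β}[f]` (normalized so that `s(x₀) = 0`) equals the generalized
down-moment of `f` with base point `x₀`:
`μ_{p,γ}[g] = Ξ_{p,αγ,βγ}[f]`. -/
theorem cumulative_moment_of_biparametric_down_transform
    (p γ α β : ℝ) (xi : ℝ) (xf : EReal) (hif : (xi : EReal) < xf)
    (x₀ : ℝ) (hx₀ : x₀ ∈ intIoo (xi : EReal) xf)
    (f f' s g : ℝ → ℝ)
    (hf_meas : Measurable f)
    (hf_nonneg : ∀ x, 0 ≤ f x)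
    (hf_supp : ∀ x ∉ intIoo (xi : EReal) xf, f x = 0)
    (hf_int : (∫ x, f x) = 1)
    (hf' : ∀ x ∈ intIoo (xi : EReal) xf, HasDerivAt f (f' x) x)
    (hf'_neg : ∀ x ∈ intIoo (xi : EReal) xf, f' x < 0)
    (hs : ∀ x ∈ intIoo (xi : EReal) xf,
      HasDerivAt s (f x ^ (1 - α) * |f' x| ^ β) x)
    (hs_mono : StrictMonoOn s (intIoo (xi : EReal) xf))
    (hs₀ : s x₀ = 0)
    (hg : ∀ x ∈ intIoo (xi : EReal) xf, g (s x) = f x ^ α * |f' x| ^ (-β))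
    (hg_supp : ∀ y ∉ s '' intIoo (xi : EReal) xf, g y = 0)
    (hg_meas : Measurable g)
    (hfin1 : IntegrableOn
      (fun σ => |∫ t in (0 : ℝ)..σ, g t ^ (1 - γ)| ^ p * g σ)
      (s '' intIoo (xi : EReal) xf))
    (hfin2 : IntegrableOn
      (fun x => |∫ t in x₀..x, f t ^ (1 - α * γ) * |f' t| ^ (β * γ)| ^ p * f x)
      (intIoo (xi : EReal) xf)) :
    (∫ σ in s '' intIoo (xi : EReal) xf,
        |∫ t in (0 : ℝ)..σ, g t ^ (1 - γ)| ^ p * g σ)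
      = ∫ x in intIoo (xi : EReal) xf,
          |∫ t in x₀..x, f t ^ (1 - α * γ) * |f' t| ^ (β * γ)| ^ p * f x := by
  set I := intIoo (xi : EReal) xf with hI
  -- basic structure of I
  have hI_eq : I = Real.toEReal ⁻¹' (Set.Ioo (xi : EReal) xf) := rfl
  have hI_open : IsOpen I := by
    rw [hI_eq]; exact isOpen_Ioo.preimage continuous_coe_real_ereal
  have hI_meas : MeasurableSet I := hI_open.measurableSet
  have hI_seg : ∀ a ∈ I, ∀ b ∈ I, Icc a b ⊆ I := by
    intro a ha b hb z hz
    exact ⟨lt_of_lt_of_le ha.1 (EReal.coe_le_coe_iff.2 hz.1),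
      lt_of_le_of_lt (EReal.coe_le_coe_iff.2 hz.2) hb.2⟩
  -- f is positive on I
  have hf_contOn : ∀ t ⊆ I, ContinuousOn f t := fun t ht x hx =>
    ((hf' x (ht hx)).continuousAt).continuousWithinAt
  have hf_pos : ∀ x ∈ I, 0 < f x := by
    intro x hx
    rcases (hf_nonneg x).lt_or_eq with h | h
    · exact h
    exfalso
    obtain ⟨ε, hε, hball⟩ := Metric.isOpen_iff.1 hI_open x hx
    set y := x + ε / 2 with hy
    have hyI : y ∈ I := hball (by
      simp only [Metric.mem_ball, hy, Real.dist_eq, add_sub_cancel_left]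
      rw [abs_of_pos (by positivity)]; linarith)
    have hIcc : Icc x y ⊆ I := hI_seg x hx y hyI
    have hanti : StrictAntiOn f (Icc x y) := by
      apply strictAntiOn_of_deriv_neg (convex_Icc x y) (hf_contOn _ hIcc)
      intro z hz
      rw [interior_Icc] at hz
      have hzI : z ∈ I := hIcc (Ioo_subset_Icc_self hz)
      rw [(hf' z hzI).deriv]
      exact hf'_neg z hzI
    have hxy : x < y := by simp [hy]; positivity
    have := hanti (left_mem_Icc.2 hxy.le) (right_mem_Icc.2 hxy.le) hxy
    rw [← h] at this
    exact absurd (hf_nonneg y) (not_le.2 this)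
  have hf'_abs : ∀ x ∈ I, 0 < |f' x| := fun x hx => abs_pos.2 (hf'_neg x hx).ne
  -- s' positive
  have hs'_pos : ∀ x ∈ I, 0 < f x ^ (1 - α) * |f' x| ^ β := fun x hx =>
    mul_pos (Real.rpow_pos_of_pos (hf_pos x hx) _) (Real.rpow_pos_of_pos (hf'_abs x hx) _)
  have hs_cont : ∀ t ⊆ I, ContinuousOn s t := fun t ht x hx =>
    ((hs x (ht hx)).continuousAt).continuousWithinAt
  -- algebraic identities
  have hcalc1 : ∀ x ∈ I, f x ^ (1 - α) * |f' x| ^ β * (f x ^ α * |f' x| ^ (-β)) = f x := by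
    intro x hx
    have hA := hf_pos x hx
    have hB := hf'_abs x hx
    rw [mul_mul_mul_comm, ← Real.rpow_add hA, ← Real.rpow_add hB]
    norm_num
  have hcalc2 : ∀ x ∈ I, f x ^ (1 - α) * |f' x| ^ β * ((f x ^ α * |f' x| ^ (-β)) ^ (1 - γ))
      = f x ^ (1 - α * γ) * |f' x| ^ (β * γ) := by
    intro x hx
    have hA := hf_pos x hx
    have hB := hf'_abs x hx
    rw [Real.mul_rpow (Real.rpow_nonneg hA.le _) (Real.rpow_nonneg hB.le _),
      ← Real.rpow_mul hA.le, ← Real.rpow_mul hB.le, mul_mul_mul_comm,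
      ← Real.rpow_add hA, ← Real.rpow_add hB]
    have e1 : 1 - α + α * (1 - γ) = 1 - α * γ := by ring
    have e2 : β + -β * (1 - γ) = β * γ := by ring
    rw [e1, e2]
  -- key: change of variables on subintervals
  have key : ∀ a ∈ I, ∀ b ∈ I, a ≤ b →
      (∫ t in s a..s b, g t ^ (1 - γ))
        = ∫ u in a..b, f u ^ (1 - α * γ) * |f' u| ^ (β * γ) := by
    intro a ha b hb hab
    have hsub : Icc a b ⊆ I := hI_seg a ha b hb
    have hsub' : Ioo a b ⊆ I := fun z hz => hsub (Ioo_subset_Icc_self hz)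
    have hsab : s a ≤ s b := hs_mono.monotoneOn ha hb hab
    have himg : s '' Ioo a b = Ioo (s a) (s b) := by
      apply Subset.antisymm
      · rintro _ ⟨z, hz, rfl⟩
        exact ⟨hs_mono ha (hsub' hz) hz.1, hs_mono (hsub' hz) hb hz.2⟩
      · exact intermediate_value_Ioo hab (hs_cont _ hsub)
    rw [intervalIntegral.integral_of_le hsab, intervalIntegral.integral_of_le hab,
      integral_Ioc_eq_integral_Ioo, integral_Ioc_eq_integral_Ioo, ← himg]
    rw [integral_image_eq_integral_abs_deriv_smul measurableSet_Ioo
      (fun x hx => ((hs x (hsub' hx)).hasDerivWithinAt)) (hs_mono.injOn.mono hsub')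
      (fun t => g t ^ (1 - γ))]
    apply setIntegral_congr_fun measurableSet_Ioo
    intro u hu
    have huI : u ∈ I := hsub' hu
    simp only [smul_eq_mul]
    rw [abs_of_pos (hs'_pos u huI), hg u huI]
    exact hcalc2 u huI
  have key' : ∀ a ∈ I, ∀ b ∈ I,
      (∫ t in s a..s b, g t ^ (1 - γ))
        = ∫ u in a..b, f u ^ (1 - α * γ) * |f' u| ^ (β * γ) := by
    intro a ha b hb
    rcases le_total a b with h | h
    · exact key a ha b hb h
    · rw [intervalIntegral.integral_symm, intervalIntegral.integral_symm b a,
        key b hb a ha h]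
  -- main change of variables
  rw [integral_image_eq_integral_abs_deriv_smul hI_meas
    (fun x hx => (hs x hx).hasDerivWithinAt) hs_mono.injOn
    (fun σ => |∫ t in (0 : ℝ)..σ, g t ^ (1 - γ)| ^ p * g σ)]
  apply setIntegral_congr_fun hI_meas
  intro x hx
  simp only [smul_eq_mul]
  rw [abs_of_pos (hs'_pos x hx), ← hs₀, key' x₀ hx₀ x hx, hg x hx]
  rw [show f x ^ (1 - α) * |f' x| ^ β *
      (|∫ u in x₀..x, f u ^ (1 - α * γ) * |f' u| ^ (β * γ)| ^ p *
        (f x ^ α * |f' x| ^ (-β)))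
    = |∫ u in x₀..x, f u ^ (1 - α * γ) * |f' u| ^ (β * γ)| ^ p *
        (f x ^ (1 - α) * |f' x| ^ β * (f x ^ α * |f' x| ^ (-β))) by ring]
  rw [hcalc1 x hx]
end
end

section
/- Let p, q ∈ ℝ, β ≠ 0, α ≠ 2β, and let f be a probability density function, positive and continuous on (x_i, x_f), with base point x₀ chosen so that Y(x) = ∫_{x₀}^x f(t)^{(β−1)/β} dt ≠ 0 for all x in (x_i, x_f). Let g = 𝔘_{α,β}[f] be the biparametric up transform of f. Then, whenever the integrals are finite, the (p,q)-Fisher information of g has the closed form F_{p,q}[g] = ∫ g(u)^{1+p(q−2)} |g'(u)|^p du = ∫ |((α−2β)/β) Y(x)|^{p(qβ+α−2β)/(2β−α)} f(x)^{(β−p)/β} dx. In particular, if α = (2−q)β then F_{p,q}[g] = ∫ f(x)^{(β−p)/β} dx. -/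
/-! Substitute `v = u x` in the Fisher integral. With `c = (α-2β)/β`, the fundamental theorem of
calculus gives `|u'| = |cY|^{β/(α-2β)} f` and `Y' = f^{(β-1)/β}`. Differentiating
`g (u x) = |cY x|^{β/(2β-α)}` and using `|β/(2β-α)| |c| = 1` expresses `|g' (u x)|` through
powers of `|cY|` and `f`, and the exponents of the transformed integrand add up to the claimed
ones. -/

open MeasureTheory Set Filter Topology

noncomputable section

theorem intIoo_eq_Ioc_union {x c : ℝ} {b : EReal} (hxc : x ≤ c) (hcb : (c : EReal) < b) :
    intIoo x b = Ioc x c ∪ intIoo c b := by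
  ext r
  simp only [intIoo, mem_ofPred_eq, mem_union, mem_Ioc, EReal.coe_lt_coe_iff]
  constructor
  · rintro ⟨hxr, hrb⟩
    exact (le_or_gt r c).imp (fun hrc => ⟨hxr, hrc⟩) fun hcr => ⟨hcr, hrb⟩
  · rintro (⟨hxr, hrc⟩ | ⟨hcr, hrb⟩)
    · exact ⟨hxr, (EReal.coe_le_coe_iff.mpr hrc).trans_lt hcb⟩
    · exact ⟨hxc.trans_lt hcr, hrb⟩

theorem integral_intIoo_eq_intervalIntegral_add {w : ℝ → ℝ} {x c : ℝ} {b : EReal}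
    (hxc : x ≤ c) (hcb : (c : EReal) < b) (hw : IntegrableOn w (intIoo x b)) :
    ∫ r in intIoo x b, w r = (∫ r in x..c, w r) + ∫ r in intIoo c b, w r := by
  rw [intIoo_eq_Ioc_union hxc hcb] at hw ⊢
  have hdisj : Disjoint (Ioc x c) (intIoo c b) :=
    disjoint_left.mpr fun r hr hr' => (EReal.coe_lt_coe_iff.mp hr'.1).not_ge hr.2
  rw [setIntegral_union hdisj (isOpen_intIoo _ _).measurableSet (hw.mono_set subset_union_left)
    (hw.mono_set subset_union_right), intervalIntegral.integral_of_le hxc]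

theorem hasDerivAt_of_eq_integral_intIoo {w u : ℝ → ℝ} {a b : EReal} {x : ℝ}
    (hw : ContinuousOn w (intIoo a b)) (hint : ∀ z ∈ intIoo a b, IntegrableOn w (intIoo z b))
    (hu : ∀ z ∈ intIoo a b, u z = ∫ r in intIoo z b, w r) (hx : x ∈ intIoo a b) :
    HasDerivAt u (-w x) x := by
  have hI := isOpen_intIoo a b
  obtain ⟨c, hxc, hcb⟩ := EReal.exists_between_coe_real hx.2
  have hxc : x < c := EReal.coe_lt_coe_iff.mp hxc
  have hwxc : IntervalIntegrable w volume x c := by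
    rw [intervalIntegrable_iff_integrableOn_Ioc_of_le hxc.le]
    exact (hint x hx).mono_set (intIoo_eq_Ioc_union hxc.le hcb ▸ subset_union_left)
  have hsplit : u =ᶠ[𝓝 x] fun z => (∫ r in z..c, w r) + ∫ r in intIoo c b, w r := by
    filter_upwards [hI.mem_nhds hx, Iio_mem_nhds hxc] with z hz hzc
    rw [hu z hz, integral_intIoo_eq_intervalIntegral_add (le_of_lt hzc) hcb (hint z hz)]
  exact ((intervalIntegral.integral_hasDerivAt_left hwxc (hw.stronglyMeasurableAtFilter hI x hx)
    (hw.continuousAt (hI.mem_nhds hx))).add_const _).congr_of_eventuallyEq hsplit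

theorem hasDerivAt_of_eq_intervalIntegral_of_ne_zero {F Y : ℝ → ℝ} {I : Set ℝ} {a x : ℝ}
    (hI : IsOpen I) (hF : ContinuousOn F I) (hY : ∀ y, Y y = ∫ t in a..y, F t) (hx : x ∈ I)
    (hne : Y x ≠ 0) : HasDerivAt Y (F x) x :=
  -- a non-integrable integrand would make `Y x = 0`
  have hint : IntervalIntegrable F volume a x :=
    by_contra fun h => hne ((hY x).trans (intervalIntegral.integral_undef h))
  (intervalIntegral.integral_hasDerivAt_right hint (hF.stronglyMeasurableAtFilter hI x hx)
    (hF.continuousAt (hI.mem_nhds hx))).congr_of_eventuallyEq (.of_forall hY)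

theorem HasDerivAt.abs_rpow_const {h : ℝ → ℝ} {h' x : ℝ} (s : ℝ) (hh : HasDerivAt h h' x)
    (hx : h x ≠ 0) :
    HasDerivAt (fun z => |h z| ^ s) (SignType.sign (h x) * h' * s * |h x| ^ (s - 1)) x := by
  have := ((hasDerivAt_abs hx).comp x hh).rpow_const (p := s) (Or.inl (abs_ne_zero.mpr hx))
  simpa [mul_comm] using this

theorem abs_mul_abs_eq_of_comp_eventuallyEq_abs_rpow {g u h : ℝ → ℝ} {g' u' h' x s : ℝ}
    (hg : HasDerivAt g g' (u x)) (hu : HasDerivAt u u' x) (hh : HasDerivAt h h' x)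
    (hx : h x ≠ 0) (hgu : g ∘ u =ᶠ[𝓝 x] fun z => |h z| ^ s) :
    |g'| * |u'| = |s| * |h'| * |h x| ^ (s - 1) := by
  have hsign : |(SignType.sign (h x) : ℝ)| = 1 := by
    rcases hx.lt_or_gt with hlt | hlt <;> simp [hlt]
  have := congrArg abs ((hg.comp x hu).unique ((hh.abs_rpow_const s hx).congr_of_eventuallyEq hgu))
  rw [abs_mul, abs_mul, abs_mul, abs_mul, abs_of_pos (Real.rpow_pos_of_pos (abs_pos.mpr hx) _),
    hsign, one_mul] at this
  rw [this]
  ring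

theorem abs_div_mul_abs_div_eq_one {α β : ℝ} (hβ : β ≠ 0) (hαβ : α ≠ 2 * β) :
    |β / (2 * β - α)| * |(α - 2 * β) / β| = 1 := by
  rw [← abs_mul, div_mul_div_comm, mul_comm β, mul_div_mul_right _ _ hβ,
    show α - 2 * β = -(2 * β - α) by ring, neg_div, div_self (sub_ne_zero.mpr hαβ.symm),
    abs_neg, abs_one]

theorem up_transform_fisher_integrand_eq {α β p q A F G : ℝ} (hβ : β ≠ 0)
    (hαβ : α ≠ 2 * β) (hA : 0 < A) (hF : 0 < F)
    (hG : G * (A ^ (β / (α - 2 * β)) * F) = A ^ (β / (2 * β - α) - 1) * F ^ ((β - 1) / β)) :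
    A ^ (β / (α - 2 * β)) * F * ((A ^ (β / (2 * β - α))) ^ (1 + p * (q - 2)) * G ^ p)
      = A ^ (p * (q * β + α - 2 * β) / (2 * β - α)) * F ^ ((β - p) / β) := by
  obtain ⟨a, rfl⟩ : ∃ a, Real.exp a = A := ⟨Real.log A, Real.exp_log hA⟩
  obtain ⟨b, rfl⟩ : ∃ b, Real.exp b = F := ⟨Real.log F, Real.exp_log hF⟩
  obtain rfl := eq_div_of_mul_eq (by positivity) hG
  simp only [← Real.exp_mul, ← Real.exp_add, ← Real.exp_sub]
  congr 1
  obtain ⟨d, rfl⟩ : ∃ d, α = 2 * β - d := ⟨2 * β - α, by ring⟩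
  have hd : d ≠ 0 := by rintro rfl; simp at hαβ
  rw [show 2 * β - d - 2 * β = -d by ring, show 2 * β - (2 * β - d) = d by ring]
  field_simp
  ring

theorem abs_deriv_smul_fisher_integrand_comp_eq {α β p q F x g' : ℝ} {Y u g : ℝ → ℝ}
    (hβ : β ≠ 0) (hαβ : α ≠ 2 * β) (hF : 0 < F) (hYx : Y x ≠ 0)
    (hY : HasDerivAt Y (F ^ ((β - 1) / β)) x)
    (hu : HasDerivAt u (-(|(α - 2 * β) / β * Y x| ^ (β / (α - 2 * β)) * F)) x)
    (hg : HasDerivAt g g' (u x))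
    (hgu : g ∘ u =ᶠ[𝓝 x] fun z => |(α - 2 * β) / β * Y z| ^ (β / (2 * β - α))) :
    |-(|(α - 2 * β) / β * Y x| ^ (β / (α - 2 * β)) * F)|
        • (g (u x) ^ (1 + p * (q - 2)) * |g'| ^ p)
      = |(α - 2 * β) / β * Y x| ^ (p * (q * β + α - 2 * β) / (2 * β - α))
        * F ^ ((β - p) / β) := by
  set c := (α - 2 * β) / β
  have hcY : c * Y x ≠ 0 := mul_ne_zero (div_ne_zero (sub_ne_zero.mpr hαβ) hβ) hYx
  have hA : 0 < |c * Y x| := abs_pos.mpr hcY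
  have hu_pos : 0 < |c * Y x| ^ (β / (α - 2 * β)) * F := mul_pos (Real.rpow_pos_of_pos hA _) hF
  have hg' := abs_mul_abs_eq_of_comp_eventuallyEq_abs_rpow hg hu (hY.const_mul c) hcY hgu
  rw [abs_neg, abs_of_pos hu_pos, abs_mul c (F ^ _),
    abs_of_pos (Real.rpow_pos_of_pos hF _)] at hg'
  rw [abs_neg, abs_of_pos hu_pos, smul_eq_mul, show g (u x) = _ from hgu.self_of_nhds]
  refine up_transform_fisher_integrand_eq hβ hαβ hA hF ?_
  linear_combination hg' + |c * Y x| ^ (β / (2 * β - α) - 1) * F ^ ((β - 1) / β) *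
    abs_div_mul_abs_div_eq_one hβ hαβ

theorem fisher_information_of_biparametric_up_transform_general
    (p q α β : ℝ) (hβ : β ≠ 0) (hαβ : α ≠ 2 * β)
    (xi xf : EReal)
    (x₀ : ℝ)
    (f Y u g g' : ℝ → ℝ)
    (hf_pos : ∀ x ∈ intIoo xi xf, 0 < f x)
    (hf_cont : ContinuousOn f (intIoo xi xf))
    (hY : ∀ x, Y x = ∫ t in x₀..x, f t ^ ((β - 1) / β))
    (hY_ne : ∀ x ∈ intIoo xi xf, Y x ≠ 0)
    (hu_fin : ∀ x ∈ intIoo xi xf,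
      IntegrableOn (fun r => |((α - 2 * β) / β) * Y r| ^ (β / (α - 2 * β)) * f r)
        (intIoo (x : EReal) xf))
    (hu : ∀ x ∈ intIoo xi xf,
      u x = ∫ r in intIoo (x : EReal) xf,
        |((α - 2 * β) / β) * Y r| ^ (β / (α - 2 * β)) * f r)
    (hu_anti : StrictAntiOn u (intIoo xi xf))
    (hg : ∀ x ∈ intIoo xi xf,
      g (u x) = |((α - 2 * β) / β) * Y x| ^ (β / (2 * β - α)))
    (hg' : ∀ x ∈ intIoo xi xf, HasDerivAt g (g' (u x)) (u x)) :
    (∫ v in u '' intIoo xi xf, g v ^ (1 + p * (q - 2)) * |g' v| ^ p)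
      = (∫ x in intIoo xi xf,
          |((α - 2 * β) / β) * Y x| ^ (p * (q * β + α - 2 * β) / (2 * β - α))
            * f x ^ ((β - p) / β))
    ∧ (α = (2 - q) * β →
        (∫ v in u '' intIoo xi xf, g v ^ (1 + p * (q - 2)) * |g' v| ^ p)
          = ∫ x in intIoo xi xf, f x ^ ((β - p) / β)) := by
  have hI := isOpen_intIoo xi xf
  have hYd : ∀ x ∈ intIoo xi xf, HasDerivAt Y (f x ^ ((β - 1) / β)) x := fun x hx =>
    hasDerivAt_of_eq_intervalIntegral_of_ne_zero hI
      (hf_cont.rpow_const fun y hy => Or.inl (hf_pos y hy).ne') hY hx (hY_ne x hx)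
  have hw_cont : ContinuousOn (fun r => |(α - 2 * β) / β * Y r| ^ (β / (α - 2 * β)) * f r)
      (intIoo xi xf) :=
    ((continuousOn_const.mul fun x hx => (hYd x hx).continuousAt.continuousWithinAt).abs
      |>.rpow_const fun x hx => Or.inl (abs_ne_zero.mpr (mul_ne_zero
        (div_ne_zero (sub_ne_zero.mpr hαβ) hβ) (hY_ne x hx)))).mul hf_cont
  have hmain : ∫ v in u '' intIoo xi xf, g v ^ (1 + p * (q - 2)) * |g' v| ^ p
      = ∫ x in intIoo xi xf,
          |(α - 2 * β) / β * Y x| ^ (p * (q * β + α - 2 * β) / (2 * β - α))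
            * f x ^ ((β - p) / β) := by
    have hud x (hx : x ∈ intIoo xi xf) := hasDerivAt_of_eq_integral_intIoo hw_cont hu_fin hu hx
    rw [integral_image_eq_integral_abs_deriv_smul hI.measurableSet
      (fun x hx => (hud x hx).hasDerivWithinAt) hu_anti.injOn]
    exact setIntegral_congr_fun hI.measurableSet fun x hx =>
      abs_deriv_smul_fisher_integrand_comp_eq hβ hαβ (hf_pos x hx) (hY_ne x hx) (hYd x hx)
        (hud x hx) (hg' x hx) (hI.eventually_mem hx |>.mono hg)
  refine ⟨hmain, fun hαq => hmain.trans (setIntegral_congr_fun hI.measurableSet fun x _ => ?_)⟩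
  rw [show p * (q * β + α - 2 * β) = 0 by rw [hαq]; ring, zero_div, Real.rpow_zero, one_mul]

/-- closed form of the `(p,q)`-Fisher information of the
biparametric up transform `g = 𝔘_{α,β}[f]`:
`F_{p,q}[g] = ∫ |((α-2β)/β) Y|^{p(qβ+α-2β)/(2β-α)} f^{(β-p)/β}`, and for
`α = (2-q)β` it reduces to `∫ f^{(β-p)/β}`. -/
theorem fisher_information_of_biparametric_up_transform
    (p q α β : ℝ) (hβ : β ≠ 0) (hαβ : α ≠ 2 * β)
    (xi xf : EReal) (hif : xi < xf)
    (x₀ : ℝ) (hx₀l : xi ≤ (x₀ : EReal)) (hx₀r : (x₀ : EReal) ≤ xf)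
    (f Y u g g' : ℝ → ℝ)
    (hf_meas : Measurable f)
    (hf_nonneg : ∀ x, 0 ≤ f x)
    (hf_supp : ∀ x ∉ intIoo xi xf, f x = 0)
    (hf_int : (∫ x, f x) = 1)
    (hf_pos : ∀ x ∈ intIoo xi xf, 0 < f x)
    (hf_cont : ContinuousOn f (intIoo xi xf))
    (hY : ∀ x, Y x = ∫ t in x₀..x, f t ^ ((β - 1) / β))
    (hY_ne : ∀ x ∈ intIoo xi xf, Y x ≠ 0)
    (hu_fin : ∀ x ∈ intIoo xi xf,
      IntegrableOn (fun r => |((α - 2 * β) / β) * Y r| ^ (β / (α - 2 * β)) * f r)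
        (intIoo (x : EReal) xf))
    (hu : ∀ x ∈ intIoo xi xf,
      u x = ∫ r in intIoo (x : EReal) xf,
        |((α - 2 * β) / β) * Y r| ^ (β / (α - 2 * β)) * f r)
    (hu_anti : StrictAntiOn u (intIoo xi xf))
    (hg : ∀ x ∈ intIoo xi xf,
      g (u x) = |((α - 2 * β) / β) * Y x| ^ (β / (2 * β - α)))
    (hg_supp : ∀ v ∉ u '' intIoo xi xf, g v = 0)
    (hg' : ∀ x ∈ intIoo xi xf, HasDerivAt g (g' (u x)) (u x))
    (hfin1 : IntegrableOn (fun v => g v ^ (1 + p * (q - 2)) * |g' v| ^ p)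
      (u '' intIoo xi xf))
    (hfin2 : IntegrableOn
      (fun x => |((α - 2 * β) / β) * Y x| ^ (p * (q * β + α - 2 * β) / (2 * β - α))
        * f x ^ ((β - p) / β))
      (intIoo xi xf)) :
    (∫ v in u '' intIoo xi xf, g v ^ (1 + p * (q - 2)) * |g' v| ^ p)
      = (∫ x in intIoo xi xf,
          |((α - 2 * β) / β) * Y x| ^ (p * (q * β + α - 2 * β) / (2 * β - α))
            * f x ^ ((β - p) / β))
    ∧ (α = (2 - q) * β →
        (∫ v in u '' intIoo xi xf, g v ^ (1 + p * (q - 2)) * |g' v| ^ p)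
          = ∫ x in intIoo xi xf, f x ^ ((β - p) / β)) :=
  fisher_information_of_biparametric_up_transform_general p q α β hβ hαβ xi xf x₀ f Y u g g' hf_pos
    hf_cont hY hY_ne hu_fin hu hu_anti hg hg'
end
end

section
/- Monotonicity of the moment complexity: let p > q > 0, α ≥ 1 and γ ∈ ℝ \ {2}, and let f be a probability density function supported in (0, ∞). Set c = α|2−γ| and define h(s) = (cs)^{(1−α)/α} f( (cs)^{1/α} / |2−γ| ) for s > 0 and h(s) = 0 for s ≤ 0 (this h is, up to dilation and reflection, the composed transform 𝔇_γ𝔈_α𝔘_γ[f]). Then h is a probability density function and, whenever the four moments involved are finite and nonzero, the moment complexity does not decrease: σ_p[h]/σ_q[h] ≥ σ_p[f]/σ_q[f]. -/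
/-!
Substituting `s = k x^α` with `k = |2 - γ|^(α-1) / α` turns the `r`-th moment of `h` into
`k^r M(αr)`, where `M(r) = ∫_{x>0} x^r f(x) dx` is the `r`-th moment of `f`; the constant `k`
cancels in the ratio, so it remains to show
`M(p)^(1/p) / M(q)^(1/q) ≤ M(αp)^(1/p) / M(αq)^(1/q)`.
By Hölder's inequality `log M` is convex (Lyapunov), and both `p` and `αq` lie in `[q, αp]`;
the two resulting chord inequalities, weighted by `q` and `p`, add up to the claim.
-/

open MeasureTheory Set

noncomputable def momentIoi (f : ℝ → ℝ) (r : ℝ) : ℝ := ∫ x in Ioi 0, x ^ r * f x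

theorem integral_rpow_mul_rpow_le {X : Type*} [MeasurableSpace X] {μ : Measure X}
    {F G : X → ℝ} (hF0 : 0 ≤ᵐ[μ] F) (hG0 : 0 ≤ᵐ[μ] G) (hF : Integrable F μ)
    (hG : Integrable G μ) {a b : ℝ} (ha : 0 ≤ a) (hb : 0 ≤ b) (hab : a + b = 1) :
    ∫ x, F x ^ a * G x ^ b ∂μ ≤ (∫ x, F x ∂μ) ^ a * (∫ x, G x ∂μ) ^ b := by
  have hFG0 : 0 ≤ᵐ[μ] fun x => F x ^ a * G x ^ b := by
    filter_upwards [hF0, hG0] with x hFx hGx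
    exact mul_nonneg (Real.rpow_nonneg hFx a) (Real.rpow_nonneg hGx b)
  have hFG : AEStronglyMeasurable (fun x => F x ^ a * G x ^ b) μ :=
    ((hF.aemeasurable.pow_const a).mul (hG.aemeasurable.pow_const b)).aestronglyMeasurable
  rw [integral_eq_lintegral_of_nonneg_ae hF0 hF.1, integral_eq_lintegral_of_nonneg_ae hG0 hG.1,
    integral_eq_lintegral_of_nonneg_ae hFG0 hFG, ENNReal.toReal_rpow, ENNReal.toReal_rpow,
    ← ENNReal.toReal_mul]
  refine ENNReal.toReal_mono (ENNReal.mul_ne_top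
    (ENNReal.rpow_ne_top_of_nonneg ha hF.lintegral_lt_top.ne)
    (ENNReal.rpow_ne_top_of_nonneg hb hG.lintegral_lt_top.ne)) ?_
  calc ∫⁻ x, ENNReal.ofReal (F x ^ a * G x ^ b) ∂μ
      = ∫⁻ x, ENNReal.ofReal (F x) ^ a * ENNReal.ofReal (G x) ^ b ∂μ := by
        refine lintegral_congr_ae ?_
        filter_upwards [hF0, hG0] with x hFx hGx
        rw [ENNReal.ofReal_mul (Real.rpow_nonneg hFx a), ENNReal.ofReal_rpow_of_nonneg hFx ha,
          ENNReal.ofReal_rpow_of_nonneg hGx hb]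
    _ ≤ _ := ENNReal.lintegral_mul_norm_pow_le hF.aemeasurable.ennreal_ofReal
        hG.aemeasurable.ennreal_ofReal ha hb hab

section

variable {E : Type*} [NormedAddCommGroup E] [NormedSpace ℝ E] {α k : ℝ}

theorem integral_Ioi_comp_mul_rpow (g : ℝ → E) (hα : 0 < α) (hk : 0 < k) :
    ∫ x in Ioi 0, (α * k * x ^ (α - 1)) • g (k * x ^ α) = ∫ s in Ioi 0, g s := by
  have h := integral_comp_rpow_Ioi (fun y => k • g (k * y)) hα.ne'
  simp only [smul_smul, abs_of_pos hα, integral_smul, integral_comp_mul_left_Ioi g 0 hk,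
    mul_zero, mul_inv_cancel₀ hk.ne', one_smul] at h
  simpa only [mul_right_comm] using h

theorem integrableOn_Ioi_comp_mul_rpow_iff (g : ℝ → E) (hα : 0 < α) (hk : 0 < k) :
    IntegrableOn (fun x => (α * k * x ^ (α - 1)) • g (k * x ^ α)) (Ioi 0) ↔
      IntegrableOn g (Ioi 0) := by
  have h := integrableOn_Ioi_comp_rpow_iff (fun y => k • g (k * y)) hα.ne'
  simp only [smul_smul, abs_of_pos hα] at h
  have hg := integrableOn_Ioi_comp_mul_left_iff g 0 hk
  rw [mul_zero] at hg
  have hsmul : IntegrableOn (fun y => k • g (k * y)) (Ioi 0) ↔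
      IntegrableOn (fun y => g (k * y)) (Ioi 0) := integrable_smul_iff hk.ne' _
  rw [← hg, ← hsmul, ← h]
  simp only [mul_right_comm]

end

section

variable {f : ℝ → ℝ}

theorem integral_abs_rpow_mul_eq_momentIoi (hf : ∀ x ≤ 0, f x = 0) (r : ℝ) :
    ∫ x, |x| ^ r * f x = momentIoi f r := by
  rw [momentIoi, ← setIntegral_eq_integral_of_forall_compl_eq_zero fun x (hx : ¬0 < x) => by
    rw [hf x (not_lt.1 hx), mul_zero]]
  exact setIntegral_congr_fun measurableSet_Ioi fun x (hx : 0 < x) => by rw [abs_of_pos hx]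

theorem MeasureTheory.Integrable.integrableOn_Ioi_rpow_mul {r : ℝ}
    (hf : Integrable fun x => |x| ^ r * f x) :
    IntegrableOn (fun x => x ^ r * f x) (Ioi 0) :=
  hf.integrableOn.congr_fun (fun x (hx : 0 < x) => by simp only [abs_of_pos hx]) measurableSet_Ioi

theorem momentIoi_nonneg (hf0 : ∀ x, 0 ≤ f x) (r : ℝ) : 0 ≤ momentIoi f r :=
  setIntegral_nonneg measurableSet_Ioi fun x hx => mul_nonneg (Real.rpow_nonneg hx.le r) (hf0 x)

theorem momentIoi_rpow_le (hf0 : ∀ x, 0 ≤ f x) {u t v : ℝ}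
    (hu : IntegrableOn (fun x => x ^ u * f x) (Ioi 0))
    (hv : IntegrableOn (fun x => x ^ v * f x) (Ioi 0)) (hut : u ≤ t) (htv : t ≤ v) :
    momentIoi f t ^ (v - u) ≤ momentIoi f u ^ (v - t) * momentIoi f v ^ (t - u) := by
  rcases (hut.trans htv).eq_or_lt with rfl | huv
  · obtain rfl : t = u := le_antisymm htv hut
    simp
  have hvu : 0 < v - u := sub_pos.2 huv
  set a := (v - t) / (v - u)
  set b := (t - u) / (v - u)
  have hab : a + b = 1 := by simp only [a, b]; field_simp; ring
  have ht : a * u + b * v = t := by simp only [a, b]; field_simp; ring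
  have interp : EqOn (fun x => (x ^ u * f x) ^ a * (x ^ v * f x) ^ b) (fun x => x ^ t * f x)
      (Ioi 0) := fun x (hx : 0 < x) => by
    beta_reduce
    rw [Real.mul_rpow (by positivity) (hf0 x), Real.mul_rpow (by positivity) (hf0 x),
      ← Real.rpow_mul hx.le, ← Real.rpow_mul hx.le, mul_mul_mul_comm, ← Real.rpow_add hx,
      ← Real.rpow_add' (hf0 x) (by simp [hab]), hab, Real.rpow_one, mul_comm u, mul_comm v, ht]
  have holder : momentIoi f t ≤ momentIoi f u ^ a * momentIoi f v ^ b := by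
    rw [momentIoi, ← setIntegral_congr_fun measurableSet_Ioi interp]
    refine integral_rpow_mul_rpow_le ?_ ?_ hu hv (div_nonneg (sub_nonneg.2 htv) hvu.le)
      (div_nonneg (sub_nonneg.2 hut) hvu.le) hab <;>
    exact (ae_restrict_mem measurableSet_Ioi).mono fun x (hx : 0 < x) =>
      mul_nonneg (Real.rpow_nonneg hx.le _) (hf0 x)
  calc momentIoi f t ^ (v - u) ≤ (momentIoi f u ^ a * momentIoi f v ^ b) ^ (v - u) :=
        Real.rpow_le_rpow (momentIoi_nonneg hf0 t) holder hvu.le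
    _ = momentIoi f u ^ (v - t) * momentIoi f v ^ (t - u) := by
        rw [Real.mul_rpow (by positivity [momentIoi_nonneg hf0 u])
          (by positivity [momentIoi_nonneg hf0 v]), ← Real.rpow_mul (momentIoi_nonneg hf0 u),
          ← Real.rpow_mul (momentIoi_nonneg hf0 v), div_mul_cancel₀ _ hvu.ne',
          div_mul_cancel₀ _ hvu.ne']

theorem momentIoi_ratio_le (hf0 : ∀ x, 0 ≤ f x) {p q α : ℝ} (hq : 0 < q) (hpq : q < p)
    (hα : 1 ≤ α) (hIq : IntegrableOn (fun x => x ^ q * f x) (Ioi 0))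
    (hIαp : IntegrableOn (fun x => x ^ (α * p) * f x) (Ioi 0))
    (hp_ne : momentIoi f p ≠ 0) (hq_ne : momentIoi f q ≠ 0)
    (hαp_ne : momentIoi f (α * p) ≠ 0) (hαq_ne : momentIoi f (α * q) ≠ 0) :
    momentIoi f p ^ (1 / p) / momentIoi f q ^ (1 / q) ≤
      momentIoi f (α * p) ^ (1 / p) / momentIoi f (α * q) ^ (1 / q) := by
  have hp : 0 < p := hq.trans hpq
  have hD : 0 < α * p - q := by nlinarith
  have pos : ∀ {r}, momentIoi f r ≠ 0 → 0 < momentIoi f r :=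
    fun h => (momentIoi_nonneg hf0 _).lt_of_ne' h
  have log_le {t} (ht : 0 < momentIoi f t) (hqt : q ≤ t) (htp : t ≤ α * p) :
      (α * p - q) * Real.log (momentIoi f t) ≤
        (α * p - t) * Real.log (momentIoi f q) + (t - q) * Real.log (momentIoi f (α * p)) := by
    have h := Real.log_le_log (by positivity) (momentIoi_rpow_le hf0 hIq hIαp hqt htp)
    rwa [Real.log_mul (by positivity [pos hq_ne]) (by positivity [pos hαp_ne]),
      Real.log_rpow ht, Real.log_rpow (pos hq_ne), Real.log_rpow (pos hαp_ne)] at h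
  have L1 := log_le (pos hp_ne) hpq.le (le_mul_of_one_le_left hp.le hα)
  have L2 := log_le (pos hαq_ne) (le_mul_of_one_le_left hq.le hα)
    (mul_le_mul_of_nonneg_left hpq.le (zero_le_one.trans hα))
  -- With weights `q` and `p`, the coefficients of `log M(q)` and `log M(αp)` become
  -- `p (αp - q)` and `q (αp - q)`.
  have key : q * Real.log (momentIoi f p) + p * Real.log (momentIoi f (α * q)) ≤
      q * Real.log (momentIoi f (α * p)) + p * Real.log (momentIoi f q) :=
    le_of_mul_le_mul_left (by linear_combination q * L1 + p * L2) hD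
  rw [Real.rpow_def_of_pos (pos hp_ne), Real.rpow_def_of_pos (pos hq_ne),
    Real.rpow_def_of_pos (pos hαp_ne), Real.rpow_def_of_pos (pos hαq_ne),
    ← Real.exp_sub, ← Real.exp_sub, Real.exp_le_exp]
  generalize Real.log (momentIoi f p) = Lp at key ⊢
  generalize Real.log (momentIoi f q) = Lq at key ⊢
  generalize Real.log (momentIoi f (α * p)) = LP at key ⊢
  generalize Real.log (momentIoi f (α * q)) = LQ at key ⊢
  field_simp
  linarith

end

section

variable {f h : ℝ → ℝ} {α b : ℝ}

theorem jacobian_smul_rpow_mul_eq_of_transform (hα : 0 < α) (hb : 0 < b)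
    (hh : ∀ s > 0, h s = (α * b * s) ^ ((1 - α) / α) * f ((α * b * s) ^ ((1 : ℝ) / α) / b))
    (r : ℝ) {x : ℝ} (hx : 0 < x) :
    (α * (b ^ (α - 1) / α) * x ^ (α - 1)) •
        ((b ^ (α - 1) / α * x ^ α) ^ r * h (b ^ (α - 1) / α * x ^ α)) =
      (b ^ (α - 1) / α) ^ r • (x ^ (α * r) * f x) := by
  set k := b ^ (α - 1) / α
  have hck : α * b * (k * x ^ α) = (b * x) ^ α := by
    rw [Real.mul_rpow hb.le hx.le]
    simp only [k, Real.rpow_sub_one hb.ne']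
    field_simp
  have hunit : α * k * x ^ (α - 1) * (b * x) ^ (1 - α) = 1 := by
    rw [Real.mul_rpow hb.le hx.le, mul_div_cancel₀ _ hα.ne', mul_mul_mul_comm,
      ← Real.rpow_add hb, ← Real.rpow_add hx]
    norm_num
  have hexp : α * ((1 - α) / α) = 1 - α := by field_simp
  rw [smul_eq_mul, smul_eq_mul, hh _ (by positivity), hck, ← Real.rpow_mul (by positivity),
    ← Real.rpow_mul (by positivity), hexp, mul_one_div_cancel hα.ne',
    Real.rpow_one, mul_div_cancel_left₀ _ hb.ne', Real.mul_rpow (by positivity) (by positivity),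
    ← Real.rpow_mul hx.le]
  linear_combination (k ^ r * x ^ (α * r) * f x) * hunit

theorem setIntegral_Ioi_rpow_mul_of_transform (hα : 0 < α) (hb : 0 < b)
    (hh : ∀ s > 0, h s = (α * b * s) ^ ((1 - α) / α) * f ((α * b * s) ^ ((1 : ℝ) / α) / b))
    (r : ℝ) :
    ∫ s in Ioi 0, s ^ r * h s = (b ^ (α - 1) / α) ^ r * momentIoi f (α * r) := by
  rw [← integral_Ioi_comp_mul_rpow (fun s => s ^ r * h s) (k := b ^ (α - 1) / α) hα
      (by positivity),
    setIntegral_congr_fun measurableSet_Ioi fun x hx =>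
      jacobian_smul_rpow_mul_eq_of_transform hα hb hh r hx,
    integral_smul, smul_eq_mul, momentIoi]

theorem integrableOn_Ioi_rpow_mul_iff_of_transform (hα : 0 < α) (hb : 0 < b)
    (hh : ∀ s > 0, h s = (α * b * s) ^ ((1 - α) / α) * f ((α * b * s) ^ ((1 : ℝ) / α) / b))
    (r : ℝ) :
    IntegrableOn (fun s => s ^ r * h s) (Ioi 0) ↔
      IntegrableOn (fun x => x ^ (α * r) * f x) (Ioi 0) := by
  rw [← integrableOn_Ioi_comp_mul_rpow_iff (fun s => s ^ r * h s) (k := b ^ (α - 1) / α) hα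
      (by positivity),
    integrableOn_congr_fun (fun x (hx : x ∈ Ioi 0) =>
      jacobian_smul_rpow_mul_eq_of_transform hα hb hh r hx) measurableSet_Ioi]
  exact integrable_smul_iff (by positivity : (b ^ (α - 1) / α) ^ r ≠ 0) _

end

theorem moment_complexity_monotonicity_general
    (p q α γ c : ℝ)
    (hq : 0 < q) (hpq : q < p) (hα : 1 ≤ α) (hγ : γ ≠ 2)
    (hc : c = α * |2 - γ|)
    (f h : ℝ → ℝ)
    (hf_nonneg : ∀ x, 0 ≤ f x)
    (hf_supp : ∀ x ≤ (0 : ℝ), f x = 0)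
    (hf_int : (∫ x, f x) = 1)
    (hh_pos : ∀ s > (0 : ℝ),
      h s = (c * s) ^ ((1 - α) / α) * f ((c * s) ^ ((1 : ℝ) / α) / |2 - γ|))
    (hh_nonpos : ∀ s ≤ (0 : ℝ), h s = 0)
    (hfin2 : Integrable (fun x => |x| ^ q * f x))
    (hfin3 : Integrable (fun s => |s| ^ p * h s))
    (hne1 : (∫ x, |x| ^ p * f x) ≠ 0)
    (hne2 : (∫ x, |x| ^ q * f x) ≠ 0)
    (hne3 : (∫ s, |s| ^ p * h s) ≠ 0)
    (hne4 : (∫ s, |s| ^ q * h s) ≠ 0) :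
    ((∀ s, 0 ≤ h s) ∧ (∫ s, h s) = 1)
    ∧ (∫ s, |s| ^ p * h s) ^ ((1 : ℝ) / p) / (∫ s, |s| ^ q * h s) ^ ((1 : ℝ) / q)
        ≥ (∫ x, |x| ^ p * f x) ^ ((1 : ℝ) / p) / (∫ x, |x| ^ q * f x) ^ ((1 : ℝ) / q) := by
  subst hc
  have hα0 : 0 < α := one_pos.trans_le hα
  have hb : 0 < |2 - γ| := abs_pos.2 (sub_ne_zero.2 hγ.symm)
  set k := |2 - γ| ^ (α - 1) / α
  have hk : 0 < k := by positivity
  have hmom_f := integral_abs_rpow_mul_eq_momentIoi hf_supp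
  have hmom_h (r : ℝ) : ∫ s, |s| ^ r * h s = k ^ r * momentIoi f (α * r) := by
    rw [integral_abs_rpow_mul_eq_momentIoi hh_nonpos, momentIoi,
      setIntegral_Ioi_rpow_mul_of_transform hα0 hb hh_pos]
  have hh_nonneg (s : ℝ) : 0 ≤ h s := by
    rcases le_or_gt s 0 with hs | hs
    · rw [hh_nonpos s hs]
    · rw [hh_pos s hs]
      exact mul_nonneg (Real.rpow_nonneg (by positivity) _) (hf_nonneg _)
  have hscale {r m : ℝ} (hr : r ≠ 0) (hm : 0 ≤ m) :
      (k ^ r * m) ^ (1 / r) = k * m ^ (1 / r) := by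
    rw [Real.mul_rpow (by positivity) hm, ← Real.rpow_mul hk.le, mul_one_div_cancel hr,
      Real.rpow_one]
  refine ⟨⟨hh_nonneg, ?_⟩, ?_⟩
  · have hf0 := hmom_f 0
    have hh0 := hmom_h 0
    simp only [Real.rpow_zero, one_mul, mul_zero] at hf0 hh0
    rw [hh0, ← hf0, hf_int]
  rw [hmom_f] at hne1 hne2
  rw [hmom_h] at hne3 hne4
  rw [hmom_f, hmom_f, hmom_h, hmom_h]
  rw [ge_iff_le, hscale (hq.trans hpq).ne' (momentIoi_nonneg hf_nonneg _),
    hscale hq.ne' (momentIoi_nonneg hf_nonneg _), mul_div_mul_left _ _ hk.ne']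
  exact momentIoi_ratio_le hf_nonneg hq hpq hα hfin2.integrableOn_Ioi_rpow_mul
    ((integrableOn_Ioi_rpow_mul_iff_of_transform hα0 hb hh_pos p).1
      hfin3.integrableOn_Ioi_rpow_mul) hne1 hne2 (right_ne_zero_of_mul hne3)
    (right_ne_zero_of_mul hne4)

/-- monotonicity of the moment complexity under the composed
transform `𝔇_γ𝔈_α𝔘_γ` (given here in closed form): `σ_p[h]/σ_q[h] ≥ σ_p[f]/σ_q[f]`. -/
theorem moment_complexity_monotonicity
    (p q α γ c : ℝ)
    (hq : 0 < q) (hpq : q < p) (hα : 1 ≤ α) (hγ : γ ≠ 2)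
    (hc : c = α * |2 - γ|)
    (f h : ℝ → ℝ)
    (hf_meas : Measurable f)
    (hf_nonneg : ∀ x, 0 ≤ f x)
    (hf_supp : ∀ x ≤ (0 : ℝ), f x = 0)
    (hf_int : (∫ x, f x) = 1)
    (hh_pos : ∀ s > (0 : ℝ),
      h s = (c * s) ^ ((1 - α) / α) * f ((c * s) ^ ((1 : ℝ) / α) / |2 - γ|))
    (hh_nonpos : ∀ s ≤ (0 : ℝ), h s = 0)
    (hfin1 : Integrable (fun x => |x| ^ p * f x))
    (hfin2 : Integrable (fun x => |x| ^ q * f x))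
    (hfin3 : Integrable (fun s => |s| ^ p * h s))
    (hfin4 : Integrable (fun s => |s| ^ q * h s))
    (hne1 : (∫ x, |x| ^ p * f x) ≠ 0)
    (hne2 : (∫ x, |x| ^ q * f x) ≠ 0)
    (hne3 : (∫ s, |s| ^ p * h s) ≠ 0)
    (hne4 : (∫ s, |s| ^ q * h s) ≠ 0) :
    ((∀ s, 0 ≤ h s) ∧ (∫ s, h s) = 1)
    ∧ (∫ s, |s| ^ p * h s) ^ ((1 : ℝ) / p) / (∫ s, |s| ^ q * h s) ^ ((1 : ℝ) / q)
        ≥ (∫ x, |x| ^ p * f x) ^ ((1 : ℝ) / p) / (∫ x, |x| ^ q * f x) ^ ((1 : ℝ) / q) :=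
  moment_complexity_monotonicity_general p q α γ c hq hpq hα hγ hc f h hf_nonneg hf_supp hf_int
    hh_pos hh_nonpos hfin2 hfin3 hne1 hne2 hne3 hne4
end
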